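/- arXiv:1603.05303 — 9 statements merged into one kernel-verified Lean document; each statement's English description precedes it below -/
import Mathlib

section
/- The set of complex numbers a such that the cubic polynomial f_{a,0}(z) = z³ − 3a²z is post-critically finite (equivalently, such that a is preperiodic under f_{a,0}) is infinite. -/
/-- The cubic polynomial `f_{a,b}(z) = z³ - 3a²z + b`. -/
noncomputable def fab (a b : ℂ) : ℂ → ℂ := fun z => z ^ 3 - 3 * a ^ 2 * z + b

/-- A point `c` is preperiodic under `f` if `f^m(c) = f^n(c)` for some `0 ≤ m < n`. -/
def IsPreperiodic (f : ℂ → ℂ) (c : ℂ) : Prop := ∃ m n : ℕ, m < n ∧ f^[m] c = f^[n] c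

/-- `f_{a,b}` is post-critically finite: both critical points `±a` are preperiodic. -/
def IsPCF (a b : ℂ) : Prop := IsPreperiodic (fab a b) a ∧ IsPreperiodic (fab a b) (-a)

/-- `C ⊆ ℂ²` is an irreducible plane curve: the zero locus of an irreducible
polynomial in two variables. -/
def IsIrredPlaneCurve (C : Set (ℂ × ℂ)) : Prop :=
  ∃ P : MvPolynomial (Fin 2) ℂ, Irreducible P ∧
    C = {p : ℂ × ℂ | MvPolynomial.eval ![p.1, p.2] P = 0}

/-!
The map `f_{a,0}` is odd and fixes `0`, so `a` (and with it `-a`) is preperiodic as soon as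
some iterate `f_{a,0}^n(a)` vanishes. As a polynomial in `a`, `g_n(a) := f_{a,0}^n(a)` satisfies
`g_{n+1} = g_n (g_n² - 3a²)` and `a² ∣ g_{n+1}`. Writing `g_{k+1} = a² r(a)` with `r ≠ 0`, a root
of `(a r(a))² = 3` gives a parameter with `g_{k+1}(a) ≠ 0 = g_{k+2}(a)`; these parameters reach `0`
after exactly `k + 2` steps, hence are pairwise distinct.
-/

open Polynomial Function

theorem isPreperiodic_of_iterate_eq_isFixedPt {f : ℂ → ℂ} {c p : ℂ} {n : ℕ}
    (hp : IsFixedPt f p) (h : f^[n] c = p) : IsPreperiodic f c :=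
  ⟨n, n + 1, n.lt_succ_self, by rw [iterate_succ_apply', h, hp.eq]⟩

theorem iterate_eq_of_le_of_isFixedPt {α : Type*} {f : α → α} {c p : α} {m n : ℕ}
    (hp : IsFixedPt f p) (hmn : m ≤ n) (h : f^[m] c = p) : f^[n] c = p := by
  obtain ⟨k, rfl⟩ := Nat.exists_eq_add_of_le' hmn
  rw [iterate_add_apply, h, iterate_fixed hp]

section Dynamics

variable (a : ℂ)

theorem isFixedPt_fab_zero_zero : IsFixedPt (fab a 0) 0 := by
  simp [IsFixedPt, fab]

theorem commute_fab_zero_neg : Function.Commute (fab a 0) Neg.neg := fun z => by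
  simp only [fab]
  ring

variable {a}

theorem isPCF_of_iterate_eq_zero {n : ℕ} (h : (fab a 0)^[n] a = 0) : IsPCF a 0 := by
  have hneg : (fab a 0)^[n] (-a) = 0 := by
    rw [((commute_fab_zero_neg a).iterate_left n).eq, h, neg_zero]
  exact ⟨isPreperiodic_of_iterate_eq_isFixedPt (isFixedPt_fab_zero_zero a) h,
    isPreperiodic_of_iterate_eq_isFixedPt (isFixedPt_fab_zero_zero a) hneg⟩

theorem iterate_fab_one_zero_succ (n : ℕ) : (fab 1 0)^[n + 1] 1 = -2 := by
  have hfix : IsFixedPt (fab 1 0) (-2) := by norm_num [IsFixedPt, fab]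
  rw [iterate_succ_apply, show fab 1 0 1 = -2 by norm_num [fab], iterate_fixed hfix]

end Dynamics

noncomputable def critOrbitPoly : ℕ → ℂ[X]
  | 0 => X
  | n + 1 => critOrbitPoly n ^ 3 - 3 * X ^ 2 * critOrbitPoly n

theorem eval_critOrbitPoly (n : ℕ) (a : ℂ) : (critOrbitPoly n).eval a = (fab a 0)^[n] a := by
  induction n with
  | zero => simp [critOrbitPoly]
  | succ n ih =>
    simp only [critOrbitPoly, eval_sub, eval_mul, eval_pow, eval_X, eval_ofNat, ih,
      iterate_succ_apply', fab]
    ring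

theorem X_dvd_critOrbitPoly (n : ℕ) : X ∣ critOrbitPoly n := by
  induction n with
  | zero => exact dvd_rfl
  | succ n ih => exact dvd_sub (dvd_pow ih three_ne_zero) ⟨3 * X * critOrbitPoly n, by ring⟩

theorem X_sq_dvd_critOrbitPoly_succ (n : ℕ) : X ^ 2 ∣ critOrbitPoly (n + 1) := by
  have hfactor : critOrbitPoly (n + 1) = critOrbitPoly n * (critOrbitPoly n ^ 2 - 3 * X ^ 2) := by
    simp only [critOrbitPoly]
    ring
  have hX := X_dvd_critOrbitPoly n
  rw [hfactor, sq]
  exact mul_dvd_mul hX (dvd_sub (dvd_pow hX two_ne_zero) ⟨3 * X, by ring⟩)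

theorem critOrbitPoly_ne_zero (n : ℕ) : critOrbitPoly n ≠ 0 := by
  intro h
  have h1 := eval_critOrbitPoly n 1
  rw [h, eval_zero] at h1
  cases n with
  | zero => exact one_ne_zero h1.symm
  | succ n => norm_num [iterate_fab_one_zero_succ] at h1

theorem exists_iterate_succ_ne_zero_iterate_succ_succ_eq_zero (k : ℕ) :
    ∃ a : ℂ, (fab a 0)^[k + 1] a ≠ 0 ∧ (fab a 0)^[k + 2] a = 0 := by
  obtain ⟨r, hr⟩ := X_sq_dvd_critOrbitPoly_succ k
  have hr0 : r ≠ 0 := by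
    rintro rfl
    exact critOrbitPoly_ne_zero (k + 1) (by simpa using hr)
  have hdeg : ((X * r) ^ 2).natDegree ≠ 0 := by
    rw [natDegree_pow, natDegree_mul X_ne_zero hr0, natDegree_X]
    omega
  obtain ⟨a, ha⟩ := IsAlgClosed.eval_surjective hdeg 3
  simp only [eval_pow, eval_mul, eval_X] at ha
  have hg : (fab a 0)^[k + 1] a = a ^ 2 * r.eval a := by
    rw [← eval_critOrbitPoly, hr, eval_mul, eval_pow, eval_X]
  refine ⟨a, ?_, ?_⟩
  · rw [hg]
    intro h0
    have : (3 : ℂ) = 0 := by linear_combination -ha + r.eval a * h0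
    norm_num at this
  · rw [iterate_succ_apply', hg, fab]
    linear_combination a ^ 4 * r.eval a * ha

theorem stmt4 : {a : ℂ | IsPCF a 0}.Infinite := by
  choose a hne hzero using exists_iterate_succ_ne_zero_iterate_succ_succ_eq_zero
  have hinj : Injective a := by
    have hlt : ∀ j k, j < k → a j ≠ a k := fun j k hjk hjk' =>
      hne k (hjk' ▸ iterate_eq_of_le_of_isFixedPt (isFixedPt_fab_zero_zero _) (by omega) (hzero j))
    intro j k h
    by_contra hjk
    rcases lt_or_gt_of_ne hjk with hjk | hjk
    exacts [hlt j k hjk h, hlt k j hjk h.symm]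
  exact Set.infinite_of_injective_forall_mem hinj fun k => isPCF_of_iterate_eq_zero (hzero k)
end

section
/- Let a, b ∈ ℂ((t)) be nonzero, set γ_a := −ord(a), γ_b := −ord(b), and γ_max := max(3γ_a, γ_b), and assume γ_max > 0. If n₀ ≥ 1 is an integer such that c_{n₀} ≠ 0 and 3γ_{n₀} > γ_max, where γ_n := −ord(c_n), then for every n ≥ n₀ one has c_n ≠ 0 and γ_n = 3^{n−n₀}·γ_{n₀}. -/
/-!
Write `v` for the valuation `orderTop`, so `v = -γ` on nonzero series and `v 0 = ⊤`. If `v(x) < 0`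
and `3 v(x) < min (3 v(a)) (v(b))`, the cube dominates `f x = x³ - 3a²x + b`:
`v(3a²x) ≥ 2 v(a) + v(x) > 3 v(x)` and `v(b) > 3 v(x)`, so `v(f x) = 3 v(x)`. As `v(x) < 0`, the
value `f x` again satisfies both inequalities, so the order triples at every step.
-/

namespace LaurentSeries

variable {R : Type*} [Ring R]

theorem coe_lt_orderTop_of_lt_order {x : R⸨X⸩} {n : ℤ} (h : n < x.order) :
    (n : WithTop ℤ) < x.orderTop := by
  rcases eq_or_ne x 0 with rfl | hx
  · simp
  · rwa [← HahnSeries.order_eq_orderTop_of_ne_zero hx, WithTop.coe_lt_coe]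

theorem orderTop_le_orderTop_three_mul (y : R⸨X⸩) : y.orderTop ≤ (3 * y).orderTop := by
  have : (3 : R⸨X⸩) * y = (3 : R) • y := by
    rw [← HahnSeries.C_mul_eq_smul, map_ofNat]
  rw [this]
  exact HahnSeries.orderTop_le_orderTop_smul _ _

variable [NoZeroDivisors R]

theorem orderTop_cubic {a b x : R⸨X⸩} {o : ℤ} (hx : x.orderTop = o) (ha : o < a.orderTop)
    (hb : ((3 * o : ℤ) : WithTop ℤ) < b.orderTop) :
    (x ^ 3 - 3 * a ^ 2 * x + b).orderTop = ((3 * o : ℤ) : WithTop ℤ) := by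
  have hcube : (x ^ 3).orderTop = (3 * o : ℤ) := by
    simp only [pow_three, HahnSeries.orderTop_mul, hx]
    norm_cast
    ring
  have hlin : ((3 * o : ℤ) : WithTop ℤ) < (3 * a ^ 2 * x).orderTop := calc
    ((3 * o : ℤ) : WithTop ℤ) = (o + o : WithTop ℤ) + x.orderTop := by rw [hx]; norm_cast; ring
    _ < (a.orderTop + a.orderTop) + x.orderTop :=
      WithTop.add_lt_add_right (by simp [hx]) (WithTop.add_lt_add ha ha)
    _ = (a ^ 2 * x).orderTop := by simp only [sq, HahnSeries.orderTop_mul]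
    _ ≤ (3 * a ^ 2 * x).orderTop := by
      rw [mul_assoc]; exact orderTop_le_orderTop_three_mul _
  have hrest : (x ^ 3).orderTop < (3 * a ^ 2 * x - b).orderTop :=
    hcube ▸ (lt_min hlin hb).trans_le HahnSeries.min_orderTop_le_orderTop_sub
  rw [sub_add, HahnSeries.orderTop_sub hrest, hcube]

theorem orderTop_iterate_cubic {a b : R⸨X⸩} {c : ℕ → R⸨X⸩}
    (hc : ∀ n, c (n + 1) = c n ^ 3 - 3 * a ^ 2 * c n + b) {o : ℤ} (h0 : (c 0).orderTop = o)
    (ho : o < 0) (ha : o < a.orderTop) (hb : ((3 * o : ℤ) : WithTop ℤ) < b.orderTop) (k : ℕ) :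
    (c k).orderTop = ((3 ^ k * o : ℤ) : WithTop ℤ) := by
  induction k with
  | zero => simpa using h0
  | succ k ih =>
    have hgrow : 3 ^ k * o ≤ o := by
      nlinarith [one_le_pow₀ (M₀ := ℤ) (a := 3) (by norm_num) (n := k)]
    rw [hc, orderTop_cubic ih (lt_of_le_of_lt (by exact_mod_cast hgrow) ha)
      (lt_of_le_of_lt (by exact_mod_cast (by omega : 3 * (3 ^ k * o) ≤ 3 * o)) hb), pow_succ,
      mul_comm _ 3, mul_assoc]

end LaurentSeries

theorem stmt5_general (a b : LaurentSeries ℂ) (c : ℕ → LaurentSeries ℂ)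
    (hcrec : ∀ n, c (n + 1) = (c n) ^ 3 - 3 * a ^ 2 * (c n) + b)
    (hmax : 0 < max (3 * (-a.order)) (-b.order))
    (n₀ : ℕ) (hcn₀ : c n₀ ≠ 0)
    (hγ : max (3 * (-a.order)) (-b.order) < 3 * (-(c n₀).order)) :
    ∀ n, n₀ ≤ n → c n ≠ 0 ∧ -(c n).order = 3 ^ (n - n₀) * (-(c n₀).order) := by
  intro n hn
  obtain ⟨haγ, hbγ⟩ := max_lt_iff.1 hγ
  have key := LaurentSeries.orderTop_iterate_cubic (c := fun k ↦ c (n₀ + k))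
    (fun k ↦ hcrec (n₀ + k))
    (HahnSeries.order_eq_orderTop_of_ne_zero hcn₀).symm (by omega)
    (LaurentSeries.coe_lt_orderTop_of_lt_order (by omega))
    (LaurentSeries.coe_lt_orderTop_of_lt_order (by omega)) (n - n₀)
  simp only [Nat.add_sub_cancel' hn] at key
  have hne : c n ≠ 0 := HahnSeries.orderTop_ne_top.1 (key ▸ WithTop.coe_ne_top)
  have hord : (c n).order = 3 ^ (n - n₀) * (c n₀).order := by
    rw [← WithTop.coe_inj, HahnSeries.order_eq_orderTop_of_ne_zero hne, key]
  exact ⟨hne, by rw [hord]; ring⟩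

theorem stmt5 (a b : LaurentSeries ℂ) (ha : a ≠ 0) (hb : b ≠ 0)
    (c : ℕ → LaurentSeries ℂ) (hc0 : c 0 = a)
    (hcrec : ∀ n, c (n + 1) = (c n) ^ 3 - 3 * a ^ 2 * (c n) + b)
    (hmax : 0 < max (3 * (-a.order)) (-b.order))
    (n₀ : ℕ) (hn₀ : 1 ≤ n₀) (hcn₀ : c n₀ ≠ 0)
    (hγ : max (3 * (-a.order)) (-b.order) < 3 * (-(c n₀).order)) :
    ∀ n, n₀ ≤ n → c n ≠ 0 ∧ -(c n).order = 3 ^ (n - n₀) * (-(c n₀).order) :=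
  stmt5_general a b c hcrec hmax n₀ hcn₀ hγ
end

section
/- Let a, b ∈ ℂ((t)) be nonzero, set γ_a := −ord(a), γ_b := −ord(b), and γ_max := max(3γ_a, γ_b), and assume γ_max > 0. If b − 2a³ ≠ 0 and ord(b − 2a³) = −γ_max, then for every n ≥ 1 one has c_n ≠ 0 and γ_n = 3^{n−1}·γ_max, where γ_n := −ord(c_n). -/
/-!
Work with the additive valuation `v = orderTop` of `ℂ((t))` and write `γ = γ_max`. The hypotheses
give `v a ≥ -γ/3` and `v b ≥ -γ`. If `v z = -g` with `g ≥ γ > 0`, then `v (z³) = -3g`, whereas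
`v (3a²z) ≥ 2 v a - g > -3g` and `v b ≥ -γ > -3g`; so `z³` is the dominant term and
`v (z³ - 3a²z + b) = -3g`. Starting from `v c₁ = v (b - 2a³) = -γ`, induction gives
`v cₙ = -3ⁿ⁻¹γ`.
-/

namespace HahnSeries

variable {Γ R : Type*} [LinearOrder Γ] [Zero Γ] [Zero R]

theorem coe_order_le_orderTop (x : R⟦Γ⟧) : (x.order : WithTop Γ) ≤ x.orderTop := by
  by_cases hx : x = 0
  · simp [hx]
  · rw [order_eq_orderTop_of_ne_zero hx]

theorem orderTop_eq_coe_iff {x : R⟦Γ⟧} {g : Γ} : x.orderTop = g ↔ x ≠ 0 ∧ x.order = g := by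
  by_cases hx : x = 0
  · simp [hx]
  · rw [← order_eq_orderTop_of_ne_zero hx, WithTop.coe_eq_coe]
    exact ⟨fun h ↦ ⟨hx, h⟩, And.right⟩

end HahnSeries

namespace AddValuation

variable {R : Type*} [CommRing R] (v : AddValuation R (WithTop ℤ))

theorem map_natCast_nonneg (n : ℕ) : 0 ≤ v (n : R) := by
  induction n with
  | zero => simp
  | succ n ih =>
    rw [Nat.cast_succ]
    exact v.map_le_add ih v.map_one.ge

variable {v} {a b : R} {α β γ : ℤ} (hα : (α : WithTop ℤ) ≤ v a) (hβ : (β : WithTop ℤ) ≤ v b)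
  (hγ : 0 < γ) (hαγ : 3 * -α ≤ γ) (hβγ : -β ≤ γ)
include hα hβ hγ hαγ hβγ

theorem map_cubic_eq {z : R} {g : ℤ} (hg : γ ≤ g) (hz : v z = (-g : ℤ)) :
    v (z ^ 3 - 3 * a ^ 2 * z + b) = (-(3 * g) : ℤ) := by
  have hcube : v (z ^ 3) = (-(3 * g) : ℤ) := by
    rw [v.map_pow, hz, ← WithTop.coe_nsmul, smul_neg, nsmul_eq_mul, Nat.cast_ofNat]
  have hlin : ((-(3 * g) : ℤ) : WithTop ℤ) < v (3 * a ^ 2 * z) :=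
    calc ((-(3 * g) : ℤ) : WithTop ℤ) < (0 + 2 * α + -g : ℤ) := WithTop.coe_lt_coe.2 (by omega)
      _ = 0 + 2 • (α : WithTop ℤ) + (-g : ℤ) := by push_cast [two_nsmul, two_mul]; rfl
      _ ≤ v (3 : ℕ) + 2 • v a + v z := by gcongr; exacts [v.map_natCast_nonneg 3, hz.ge]
      _ = v (3 * a ^ 2 * z) := by rw [v.map_mul, v.map_mul, v.map_pow, Nat.cast_ofNat]
  have hconst : ((-(3 * g) : ℤ) : WithTop ℤ) < v b :=
    (WithTop.coe_lt_coe.2 (by omega)).trans_le hβ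
  rw [show z ^ 3 - 3 * a ^ 2 * z + b = z ^ 3 + (b - 3 * a ^ 2 * z) by ring,
    v.map_add_eq_of_lt_left (hcube ▸ (lt_min hconst hlin).trans_le (v.map_sub _ _)), hcube]

theorem map_cubic_iterate_eq {c : ℕ → R} (hc : ∀ n, c (n + 1) = c n ^ 3 - 3 * a ^ 2 * c n + b)
    (hc1 : v (c 1) = (-γ : ℤ)) (n : ℕ) : v (c (n + 1)) = (-(3 ^ n * γ) : ℤ) := by
  induction n with
  | zero => simpa using hc1
  | succ n ih =>
    have hγle : γ ≤ 3 ^ n * γ := le_mul_of_one_le_left hγ.le (one_le_pow₀ (by norm_num))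
    rw [hc, map_cubic_eq hα hβ hγ hαγ hβγ hγle ih, pow_succ', mul_assoc]

end AddValuation

theorem stmt6_general (a b : LaurentSeries ℂ)
    (c : ℕ → LaurentSeries ℂ) (hc0 : c 0 = a)
    (hcrec : ∀ n, c (n + 1) = (c n) ^ 3 - 3 * a ^ 2 * (c n) + b)
    (hmax : 0 < max (3 * (-a.order)) (-b.order))
    (hne : b - 2 * a ^ 3 ≠ 0)
    (hord : (b - 2 * a ^ 3).order = -(max (3 * (-a.order)) (-b.order))) :
    ∀ n, 1 ≤ n → c n ≠ 0 ∧
      -(c n).order = 3 ^ (n - 1) * max (3 * (-a.order)) (-b.order) := by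
  have hv (x : LaurentSeries ℂ) : HahnSeries.addVal ℤ ℂ x = x.orderTop := HahnSeries.addVal_apply
  have hc1 : HahnSeries.addVal ℤ ℂ (c 1) = (-max (3 * (-a.order)) (-b.order) : ℤ) := by
    rw [hcrec, hc0, show a ^ 3 - 3 * a ^ 2 * a + b = b - 2 * a ^ 3 by ring,
      HahnSeries.addVal_apply_of_ne hne, hord]
  have hval := AddValuation.map_cubic_iterate_eq (hv a ▸ HahnSeries.coe_order_le_orderTop a)
    (hv b ▸ HahnSeries.coe_order_le_orderTop b) hmax (le_max_left _ _) (le_max_right _ _) hcrec hc1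
  intro n hn
  obtain ⟨m, rfl⟩ := Nat.exists_eq_add_of_le' hn
  obtain ⟨hcne, hcord⟩ := HahnSeries.orderTop_eq_coe_iff.1 (hv _ ▸ hval m)
  exact ⟨hcne, by simp [hcord]⟩

theorem stmt6 (a b : LaurentSeries ℂ) (ha : a ≠ 0) (hb : b ≠ 0)
    (c : ℕ → LaurentSeries ℂ) (hc0 : c 0 = a)
    (hcrec : ∀ n, c (n + 1) = (c n) ^ 3 - 3 * a ^ 2 * (c n) + b)
    (hmax : 0 < max (3 * (-a.order)) (-b.order))
    (hne : b - 2 * a ^ 3 ≠ 0)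
    (hord : (b - 2 * a ^ 3).order = -(max (3 * (-a.order)) (-b.order))) :
    ∀ n, 1 ≤ n → c n ≠ 0 ∧
      -(c n).order = 3 ^ (n - 1) * max (3 * (-a.order)) (-b.order) :=
  stmt6_general a b c hc0 hcrec hmax hne hord
end

section
/- The sequence of functions F_n : ℂ² → ℝ defined by F_n(a,b) := 3^{−n}·log⁺|f_{a,b}^n(a)| converges locally uniformly on ℂ² as n → ∞; consequently, the limit function G⁺(a,b) := lim_{n→∞} 3^{−n}·log⁺|f_{a,b}^n(a)| is continuous on ℂ². -/
open Filter

/-- `log⁺ x = max (log x) 0`. -/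
noncomputable def logPlus (x : ℝ) : ℝ := max (Real.log x) 0

/-!
Since `f_{a,b}(z) - z³ = b - 3a²z` has lower order, `log⁺ ‖f_{a,b}(z)‖ = 3 log⁺ ‖z‖ + O(1)` with
an error bounded by a continuous function of `(a, b)`. Along the critical orbit this makes
`F_{n+1} - F_n = O(3⁻ⁿ)` locally uniformly, so `F_n = F_0 + Σ_{k<n} (F_{k+1} - F_k)` converges
locally uniformly by the Weierstrass M-test, and the limit of the continuous `F_n` is continuous.
-/

open Real

theorem tendstoLocallyUniformly_of_norm_sub_succ_le {X E : Type*} [TopologicalSpace X]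
    [NormedAddCommGroup E] [CompleteSpace E] {F : ℕ → X → E} {C : X → ℝ} {u : ℕ → ℝ}
    (hC : Continuous C) (hu0 : ∀ n, 0 ≤ u n) (hu : Summable u)
    (hF : ∀ n x, ‖F (n + 1) x - F n x‖ ≤ C x * u n) :
    TendstoLocallyUniformly F (fun x ↦ F 0 x + ∑' n, (F (n + 1) x - F n x)) atTop := by
  refine tendstoLocallyUniformly_of_forall_exists_nhds fun x ↦
    ⟨{y | C y < C x + 1}, (isOpen_lt hC continuous_const).mem_nhds (lt_add_one (C x)), ?_⟩
  have hsum := tendstoUniformlyOn_tsum_nat (hu.mul_left (C x + 1)) fun n y (hy : C y < C x + 1) ↦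
    (hF n y).trans (mul_le_mul_of_nonneg_right hy.le (hu0 n))
  have hconst : TendstoUniformlyOn (fun _ : ℕ ↦ F 0) (F 0) atTop {y | C y < C x + 1} :=
    fun _ hV ↦ .of_forall fun _ _ _ ↦ refl_mem_uniformity hV
  convert hconst.add hsum using 1
  · funext N y
    rw [Pi.add_apply, Pi.add_apply, Finset.sum_range_sub (F · y), add_sub_cancel]
  · rfl

section PerturbedPower

variable {𝕜 : Type*} [NormedDivisionRing 𝕜] {z w : 𝕜} {c : ℝ} {d : ℕ}

theorem posLog_norm_le_of_norm_sub_pow_le (h : ‖w - z ^ (d + 1)‖ ≤ c * max 1 ‖z‖ ^ d) :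
    log⁺ ‖w‖ ≤ log⁺ (1 + c) + (d + 1) * log⁺ ‖z‖ := by
  set m := max 1 ‖z‖
  have hm : 1 ≤ m := le_max_left _ _
  have hc : 0 ≤ c := nonneg_of_mul_nonneg_left ((norm_nonneg _).trans h) (by positivity)
  have hw : ‖w‖ ≤ (1 + c) * m ^ (d + 1) := by
    have hz : ‖z‖ ^ (d + 1) ≤ m ^ (d + 1) := by gcongr; exact le_max_right _ _
    have hmd : m ^ d ≤ m ^ (d + 1) := pow_le_pow_right₀ hm d.le_succ
    calc ‖w‖ ≤ ‖z ^ (d + 1)‖ + ‖w - z ^ (d + 1)‖ := norm_le_norm_add_norm_sub' w _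
      _ ≤ m ^ (d + 1) + c * m ^ (d + 1) := by
        rw [norm_pow]; gcongr; exact h.trans (by gcongr)
      _ = (1 + c) * m ^ (d + 1) := by ring
  have hlogm : log⁺ m = log⁺ ‖z‖ := by
    rw [posLog_eq_log (by rwa [abs_of_nonneg (by positivity)]),
      posLog_eq_log_max_one (norm_nonneg z)]
  calc log⁺ ‖w‖ ≤ log⁺ ((1 + c) * m ^ (d + 1)) := posLog_le_posLog (norm_nonneg w) hw
    _ ≤ log⁺ (1 + c) + log⁺ (m ^ (d + 1)) := posLog_mul
    _ = log⁺ (1 + c) + (d + 1) * log⁺ ‖z‖ := by rw [posLog_pow, hlogm]; push_cast; ring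

theorem le_posLog_norm_of_norm_sub_pow_le (h : ‖w - z ^ (d + 1)‖ ≤ c * max 1 ‖z‖ ^ d) :
    (d + 1) * log⁺ ‖z‖ ≤ log⁺ ‖w‖ + log 2 + (d + 1) * log⁺ (2 * c) := by
  have hlog2 : 0 ≤ log 2 := log_nonneg one_le_two
  by_cases hsmall : ‖z‖ ≤ 1 ∨ ‖z‖ ≤ 2 * c
  · have hz : log⁺ ‖z‖ ≤ log⁺ (2 * c) := by
      rcases hsmall with hz | hz
      · rw [(posLog_eq_zero_iff _).2 (by rwa [abs_norm])]; exact posLog_nonneg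
      · exact posLog_le_posLog (norm_nonneg z) hz
    calc (d + 1) * log⁺ ‖z‖ ≤ (d + 1) * log⁺ (2 * c) := by gcongr
      _ ≤ log⁺ ‖w‖ + log 2 + (d + 1) * log⁺ (2 * c) := by linarith [posLog_nonneg (x := ‖w‖)]
  push Not at hsmall
  obtain ⟨hz1, hzc⟩ := hsmall
  have hw : ‖z‖ ^ (d + 1) ≤ 2 * ‖w‖ := by
    have hdefect : ‖w - z ^ (d + 1)‖ ≤ ‖z‖ ^ (d + 1) / 2 :=
      calc ‖w - z ^ (d + 1)‖ ≤ c * ‖z‖ ^ d := by rwa [max_eq_right hz1.le] at h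
        _ ≤ ‖z‖ / 2 * ‖z‖ ^ d := by gcongr; linarith
        _ = ‖z‖ ^ (d + 1) / 2 := by ring
    have := norm_le_norm_add_norm_sub w (z ^ (d + 1))
    rw [norm_pow] at this
    linarith
  have hc : 0 ≤ (d + 1) * log⁺ (2 * c) := mul_nonneg (by positivity) posLog_nonneg
  calc (d + 1) * log⁺ ‖z‖ = log⁺ (‖z‖ ^ (d + 1)) := by rw [posLog_pow]; push_cast; ring
    _ ≤ log⁺ (2 * ‖w‖) := posLog_le_posLog (by positivity) hw
    _ ≤ log⁺ 2 + log⁺ ‖w‖ := posLog_mul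
    _ ≤ log⁺ ‖w‖ + log 2 + (d + 1) * log⁺ (2 * c) := by
      rw [posLog_eq_log (by norm_num)]; linarith

theorem abs_posLog_norm_sub_le_of_norm_sub_pow_le (h : ‖w - z ^ (d + 1)‖ ≤ c * max 1 ‖z‖ ^ d) :
    |log⁺ ‖w‖ - (d + 1) * log⁺ ‖z‖| ≤ log⁺ (1 + c) + log 2 + (d + 1) * log⁺ (2 * c) := by
  have hupper := posLog_norm_le_of_norm_sub_pow_le h
  have hlower := le_posLog_norm_of_norm_sub_pow_le h
  have hlog2 : 0 ≤ log 2 := log_nonneg one_le_two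
  have hc : 0 ≤ (d + 1) * log⁺ (2 * c) := mul_nonneg (by positivity) posLog_nonneg
  rw [abs_sub_le_iff]
  constructor <;> linarith [posLog_nonneg (x := 1 + c)]

end PerturbedPower

theorem abs_inv_pow_succ_mul_sub_inv_pow_mul_le {q x y K : ℝ} (hq : 0 < q) (n : ℕ)
    (h : |y - q * x| ≤ K) :
    |(q ^ (n + 1))⁻¹ * y - (q ^ n)⁻¹ * x| ≤ K * (q ^ (n + 1))⁻¹ := by
  have hqn : (q ^ n)⁻¹ = (q ^ (n + 1))⁻¹ * q := by
    rw [pow_succ, mul_inv, mul_assoc, inv_mul_cancel₀ hq.ne', mul_one]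
  rw [hqn, mul_assoc, ← mul_sub, abs_mul, abs_of_pos (by positivity), mul_comm]
  gcongr

theorem logPlus_eq_posLog : logPlus = posLog := funext fun _ ↦ max_comm _ _

theorem norm_fab_sub_pow_three_le (a b z : ℂ) :
    ‖fab a b z - z ^ 3‖ ≤ (3 * ‖a‖ ^ 2 + ‖b‖) * max 1 ‖z‖ ^ 2 := by
  have hm : 1 ≤ max 1 ‖z‖ := le_max_left _ _
  have hz : ‖z‖ ≤ max 1 ‖z‖ ^ 2 := (le_max_right _ _).trans (by nlinarith)
  calc ‖fab a b z - z ^ 3‖ = ‖b - 3 * a ^ 2 * z‖ := by congr 1; simp only [fab]; ring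
    _ ≤ ‖b‖ + 3 * ‖a‖ ^ 2 * ‖z‖ := by
      refine (norm_sub_le _ _).trans_eq ?_
      simp [norm_pow]
    _ ≤ ‖b‖ * max 1 ‖z‖ ^ 2 + 3 * ‖a‖ ^ 2 * max 1 ‖z‖ ^ 2 := by
      gcongr
      exact le_mul_of_one_le_right (norm_nonneg b) (one_le_pow₀ hm)
    _ = (3 * ‖a‖ ^ 2 + ‖b‖) * max 1 ‖z‖ ^ 2 := by ring

noncomputable def fabDefect (a b : ℂ) : ℝ :=
  log⁺ (1 + (3 * ‖a‖ ^ 2 + ‖b‖)) + log 2 + 3 * log⁺ (2 * (3 * ‖a‖ ^ 2 + ‖b‖))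

theorem continuous_fabDefect : Continuous fun p : ℂ × ℂ ↦ fabDefect p.1 p.2 := by
  unfold fabDefect
  fun_prop

theorem abs_posLog_norm_fab_sub_le (a b z : ℂ) :
    |log⁺ ‖fab a b z‖ - 3 * log⁺ ‖z‖| ≤ fabDefect a b := by
  have h := abs_posLog_norm_sub_le_of_norm_sub_pow_le (d := 2) (norm_fab_sub_pow_three_le a b z)
  norm_num at h
  exact h

theorem continuous_iterate_fab (n : ℕ) : Continuous fun p : ℂ × ℂ ↦ (fab p.1 p.2)^[n] p.1 := by
  induction n with
  | zero => exact continuous_fst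
  | succ n ih =>
    simp only [Function.iterate_succ_apply', fab]
    fun_prop

theorem stmt9 :
    ∃ G : ℂ × ℂ → ℝ,
      TendstoLocallyUniformly
        (fun (n : ℕ) (p : ℂ × ℂ) =>
          ((3 : ℝ) ^ n)⁻¹ * logPlus ‖(fab p.1 p.2)^[n] p.1‖)
        G atTop ∧ Continuous G := by
  simp only [logPlus_eq_posLog]
  have hstep (n : ℕ) (p : ℂ × ℂ) :
      ‖((3 : ℝ) ^ (n + 1))⁻¹ * log⁺ ‖(fab p.1 p.2)^[n + 1] p.1‖
        - ((3 : ℝ) ^ n)⁻¹ * log⁺ ‖(fab p.1 p.2)^[n] p.1‖‖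
        ≤ fabDefect p.1 p.2 * ((3 : ℝ) ^ (n + 1))⁻¹ := by
    rw [Real.norm_eq_abs, Function.iterate_succ_apply']
    exact abs_inv_pow_succ_mul_sub_inv_pow_mul_le three_pos n (abs_posLog_norm_fab_sub_le _ _ _)
  have hsummable : Summable fun n : ℕ ↦ ((3 : ℝ) ^ (n + 1))⁻¹ := by
    simp only [← inv_pow]
    exact (summable_nat_add_iff 1).2 (summable_geometric_of_lt_one (by norm_num) (by norm_num))
  have hlim := tendstoLocallyUniformly_of_norm_sub_succ_le
    (F := fun n p ↦ ((3 : ℝ) ^ n)⁻¹ * log⁺ ‖(fab p.1 p.2)^[n] p.1‖)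
    continuous_fabDefect (fun n ↦ (inv_pos.2 (pow_pos three_pos (n + 1))).le) hsummable hstep
  refine ⟨_, hlim, hlim.continuous (.of_forall fun n ↦ ?_)⟩
  exact continuous_const.mul (continuous_posLog.comp (continuous_iterate_fab n).norm)
end

section
/- In the meromorphic setting, suppose that every c_n is not identically zero and that γ_n → +∞ as n → ∞. Then there exists 0 < r < r₀ such that the sequence of functions t ↦ 3^{−n}·log|t^{γ_n}·c_n(t)| converges uniformly on the punctured disk {0 < |t| < r} as n → ∞ (for each sufficiently large n, the function t^{γ_n}·c_n(t) extends holomorphically and non-vanishing across 0, so these functions extend continuously to {|t| < r}). -/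
/-!
Since `γ n → ∞` while `a` and `b` have poles of bounded order, some `c N` dominates `a` and `b`
near `0`: `2 (3|a|² + |b| + 1) ≤ |c N|²` on a punctured disk. This region is invariant under
`x ↦ x³ - 3a²x + b`, and on it `|c (k+1) - c k ³| ≤ |c k ³| / 2`. Comparing leading terms at `0`
then forces `γ (k+1) = 3 γ k`, so `X k := t ^ γ k * c k` satisfies
`|log |X (k+1)| - 3 log |X k|| ≤ log 2` on the disk, and the telescoping series of
`3⁻¹ ^ (k+1) (log |X (k+1)| - 3 log |X k|)` converges uniformly.
-/

open Filter Metric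

/-- `g` is meromorphic at `0` with order of vanishing `d ∈ ℤ` (negative for a pole):
near `0` (but off `0`) we have `g t = t ^ d · u t` with `u` analytic and nonvanishing
at `0`. -/
def HasOrdAtZero (g : ℂ → ℂ) (d : ℤ) : Prop :=
  ∃ u : ℂ → ℂ, AnalyticAt ℂ u 0 ∧ u 0 ≠ 0 ∧
    ∀ᶠ t in nhdsWithin (0 : ℂ) {0}ᶜ, g t = t ^ d * u t

/-- Meromorphic at `0`: some order, or identically zero near `0`. -/
def MeroAtZero (g : ℂ → ℂ) : Prop :=
  (∃ d : ℤ, HasOrdAtZero g d) ∨ ∀ᶠ t in nhdsWithin (0 : ℂ) {0}ᶜ, g t = 0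

open Topology

theorem zpow_three_mul {G : Type*} [DivisionMonoid G] (t : G) (k : ℤ) :
    t ^ (3 * k) = (t ^ k) ^ 3 := by
  rw [mul_comm, zpow_mul]
  norm_cast

theorem norm_le_two_mul_of_norm_sub_le_half {E : Type*} [SeminormedAddCommGroup E] {y z : E}
    (h : ‖y - z‖ ≤ ‖z‖ / 2) : ‖y‖ ≤ 2 * ‖z‖ ∧ ‖z‖ ≤ 2 * ‖y‖ := by
  have := abs_le.1 ((abs_norm_sub_norm_le y z).trans h)
  constructor <;> linarith [norm_nonneg z]

theorem abs_log_norm_sub_log_norm_le {E : Type*} [SeminormedAddCommGroup E] {y z : E}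
    (h : ‖y - z‖ ≤ ‖z‖ / 2) : |Real.log ‖y‖ - Real.log ‖z‖| ≤ Real.log 2 := by
  obtain ⟨hyz, hzy⟩ := norm_le_two_mul_of_norm_sub_le_half h
  rcases (norm_nonneg z).eq_or_lt with hz | hz
  · have hy : ‖y‖ = 0 := le_antisymm (by linarith) (norm_nonneg y)
    rw [hy, ← hz, sub_self, abs_zero]
    exact (Real.log_pos one_lt_two).le
  have hy : 0 < ‖y‖ := by linarith
  have hlog {p q : ℝ} (hp : 0 < p) (hq : 0 < q) (hpq : q ≤ 2 * p) :
      Real.log q ≤ Real.log 2 + Real.log p := by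
    rw [← Real.log_mul two_ne_zero hp.ne']
    exact Real.log_le_log hq hpq
  exact abs_le.2 ⟨by linarith [hlog hy hz hzy], by linarith [hlog hz hy hyz]⟩

theorem tendstoUniformlyOn_of_eventually_norm_sub_le {α E : Type*} [NormedAddCommGroup E]
    [CompleteSpace E] {F : ℕ → α → E} {u : ℕ → ℝ} (hu : Summable u) {s : Set α}
    (h : ∀ᶠ n in atTop, ∀ x ∈ s, ‖F (n + 1) x - F n x‖ ≤ u n) :
    TendstoUniformlyOn F (fun x => F 0 x + ∑' n, (F (n + 1) x - F n x)) atTop s := by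
  have hsum := tendstoUniformlyOn_tsum_nat_eventually hu h
  rw [Metric.tendstoUniformlyOn_iff] at hsum ⊢
  intro ε hε
  filter_upwards [hsum ε hε] with n hn x hx
  rw [← add_sub_cancel (F 0 x) (F n x), ← Finset.sum_range_sub (F · x) n, dist_add_left]
  exact hn x hx

section Asymptotics

variable {𝕜 : Type*} [NontriviallyNormedField 𝕜]

theorem tendsto_zpow_nhdsNE_zero_of_pos {k : ℤ} (hk : 0 < k) :
    Tendsto (fun t : 𝕜 => t ^ k) (𝓝[≠] 0) (𝓝 0) := by
  have h := (continuousAt_zpow₀ (0 : 𝕜) k (Or.inr hk.le)).tendsto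
  rw [zero_zpow k hk.ne'] at h
  exact h.mono_left nhdsWithin_le_nhds

theorem nonneg_of_eventually_norm_zpow_le {k : ℤ} {B : ℝ}
    (h : ∀ᶠ t in 𝓝[≠] (0 : 𝕜), ‖t ^ k‖ ≤ B) : 0 ≤ k := by
  by_contra! hk
  have hlarge := (tendsto_norm_cobounded_atTop.comp
    (tendsto_zpow_nhdsNE_zero_cobounded (α := 𝕜) hk)).eventually_gt_atTop B
  obtain ⟨t, hle, hgt⟩ := (h.and hlarge).exists
  exact hle.not_gt hgt

theorem le_of_tendsto_zpow_mul {g h : 𝕜 → 𝕜} {m n : ℤ} {L M : 𝕜} {C : ℝ}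
    (hg : Tendsto (fun t => t ^ m * g t) (𝓝[≠] 0) (𝓝 L))
    (hh : Tendsto (fun t => t ^ n * h t) (𝓝[≠] 0) (𝓝 M)) (hM : M ≠ 0)
    (hhg : ∀ᶠ t in 𝓝[≠] 0, ‖h t‖ ≤ C * ‖g t‖) : n ≤ m := by
  have hM' : ‖M‖ ≠ 0 := norm_ne_zero_iff.2 hM
  have hpos := hh.norm.eventually (lt_mem_nhds (norm_pos_iff.2 hM))
  have hbound : ∀ᶠ t in 𝓝[≠] 0, C * ‖t ^ m * g t‖ / ‖t ^ n * h t‖ < C * ‖L‖ / ‖M‖ + 1 :=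
    ((hg.norm.const_mul C).div hh.norm hM').eventually (gt_mem_nhds (lt_add_one _))
  refine sub_nonneg.1 (nonneg_of_eventually_norm_zpow_le (𝕜 := 𝕜) (B := C * ‖L‖ / ‖M‖ + 1) ?_)
  filter_upwards [self_mem_nhdsWithin, hpos, hbound, hhg] with t ht hpos hbound hhg
  refine le_trans ?_ hbound.le
  rw [le_div_iff₀ hpos]
  calc ‖t ^ (m - n)‖ * ‖t ^ n * h t‖ = ‖t ^ m‖ * ‖h t‖ := by
        rw [← norm_mul, ← mul_assoc, ← zpow_add₀ ht, sub_add_cancel, norm_mul]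
    _ ≤ ‖t ^ m‖ * (C * ‖g t‖) := by gcongr
    _ = C * ‖t ^ m * g t‖ := by rw [norm_mul]; ring

theorem eq_of_tendsto_zpow_mul_of_norm_sub_le {g h : 𝕜 → 𝕜} {m n : ℤ} {L M : 𝕜}
    (hg : Tendsto (fun t => t ^ m * g t) (𝓝[≠] 0) (𝓝 L)) (hL : L ≠ 0)
    (hh : Tendsto (fun t => t ^ n * h t) (𝓝[≠] 0) (𝓝 M)) (hM : M ≠ 0)
    (hgh : ∀ᶠ t in 𝓝[≠] 0, ‖h t - g t‖ ≤ ‖g t‖ / 2) : m = n :=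
  have hcomp := hgh.mono fun _ ht => norm_le_two_mul_of_norm_sub_le_half ht
  le_antisymm (le_of_tendsto_zpow_mul hh hg hL (hcomp.mono fun _ => And.right))
    (le_of_tendsto_zpow_mul hg hh hM (hcomp.mono fun _ => And.left))

end Asymptotics

theorem HasOrdAtZero.exists_tendsto_zpow_neg_mul {g : ℂ → ℂ} {d : ℤ} (hg : HasOrdAtZero g d) :
    ∃ L ≠ 0, Tendsto (fun t => t ^ (-d) * g t) (𝓝[≠] 0) (𝓝 L) := by
  obtain ⟨u, hu, hu0, hgu⟩ := hg
  refine ⟨u 0, hu0, (hu.continuousAt.tendsto.mono_left nhdsWithin_le_nhds).congr' ?_⟩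
  filter_upwards [self_mem_nhdsWithin, hgu] with t ht hgt
  rw [hgt, zpow_neg, inv_mul_cancel_left₀ (zpow_ne_zero d ht)]

theorem MeroAtZero.eventually_tendsto_zpow_mul {g : ℂ → ℂ} (hg : MeroAtZero g) :
    ∀ᶠ k : ℤ in atTop, Tendsto (fun t => t ^ k * g t) (𝓝[≠] 0) (𝓝 0) := by
  rcases hg with ⟨d, u, hu, -, hgu⟩ | hg0
  · filter_upwards [eventually_gt_atTop (-d)] with k hk
    have hlim := (tendsto_zpow_nhdsNE_zero_of_pos (𝕜 := ℂ) (k := k + d) (by omega)).mul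
      (hu.continuousAt.tendsto.mono_left nhdsWithin_le_nhds)
    rw [zero_mul] at hlim
    refine hlim.congr' ?_
    filter_upwards [self_mem_nhdsWithin, hgu] with t ht hgt
    rw [hgt, ← mul_assoc, ← zpow_add₀ ht]
  · refine Eventually.of_forall fun k => tendsto_const_nhds.congr' ?_
    filter_upwards [hg0] with t ht
    rw [ht, mul_zero]

section EscapeRegion

variable {𝕜 : Type*} [RCLike 𝕜]

def InEscapeRegion (A B x : 𝕜) : Prop :=
  2 * (3 * ‖A‖ ^ 2 + ‖B‖ + 1) ≤ ‖x‖ ^ 2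

variable {A B x : 𝕜}

theorem InEscapeRegion.norm_cubic_sub_pow_three_le (h : InEscapeRegion A B x) :
    ‖x ^ 3 - 3 * A ^ 2 * x + B - x ^ 3‖ ≤ ‖x ^ 3‖ / 2 := by
  have hx : 1 ≤ ‖x‖ := by
    unfold InEscapeRegion at h
    nlinarith [norm_nonneg A, norm_nonneg B, norm_nonneg x]
  calc ‖x ^ 3 - 3 * A ^ 2 * x + B - x ^ 3‖ = ‖-(3 * A ^ 2 * x) + B‖ := by ring_nf
    _ ≤ 3 * ‖A‖ ^ 2 * ‖x‖ + ‖B‖ := by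
      refine (norm_add_le _ _).trans_eq ?_
      rw [norm_neg, norm_mul, norm_mul, norm_pow, RCLike.norm_ofNat]
    _ ≤ ‖x ^ 3‖ / 2 := by
      unfold InEscapeRegion at h
      rw [norm_pow]
      nlinarith [norm_nonneg A, norm_nonneg B, norm_nonneg x]

theorem InEscapeRegion.cubic (h : InEscapeRegion A B x) :
    InEscapeRegion A B (x ^ 3 - 3 * A ^ 2 * x + B) := by
  have hgrow := (norm_le_two_mul_of_norm_sub_le_half h.norm_cubic_sub_pow_three_le).2
  unfold InEscapeRegion at h ⊢
  rw [norm_pow] at hgrow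
  have hx : ‖x‖ ≤ ‖x ^ 3 - 3 * A ^ 2 * x + B‖ := by
    nlinarith [norm_nonneg A, norm_nonneg B, norm_nonneg x]
  nlinarith [norm_nonneg x]

theorem InEscapeRegion.of_cubic_iterate {x : ℕ → 𝕜}
    (hx : ∀ n, x (n + 1) = x n ^ 3 - 3 * A ^ 2 * x n + B) {N : ℕ}
    (hN : InEscapeRegion A B (x N)) {k : ℕ} (hk : N ≤ k) : InEscapeRegion A B (x k) := by
  induction k, hk using Nat.le_induction with
  | base => exact hN
  | succ k _ ih => rw [hx]; exact ih.cubic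

theorem eventually_inEscapeRegion {α : Type*} {l : Filter α} {w x A B : α → 𝕜} {L : 𝕜}
    (hx : Tendsto (fun t => w t * x t) l (𝓝 L)) (hL : L ≠ 0) (hw : Tendsto w l (𝓝 0))
    (hA : Tendsto (fun t => w t * A t) l (𝓝 0)) (hB : Tendsto (fun t => w t * B t) l (𝓝 0)) :
    ∀ᶠ t in l, InEscapeRegion (A t) (B t) (x t) := by
  have hsmall : Tendsto (fun t => 2 * (3 * ‖w t * A t‖ ^ 2 + ‖w t‖ * ‖w t * B t‖ + ‖w t‖ ^ 2))
      l (𝓝 0) := by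
    simpa using (((hA.norm.pow 2).const_mul 3).add (hw.norm.mul hB.norm)).add
      (hw.norm.pow 2) |>.const_mul 2
  filter_upwards [hsmall.eventually_lt (hx.norm.pow 2) (by positivity)] with t ht
  refine le_of_lt (lt_of_mul_lt_mul_left (a := ‖w t‖ ^ 2) ?_ (by positivity))
  simp only [norm_mul, mul_pow] at ht ⊢
  linarith

theorem abs_three_pow_inv_mul_log_norm_sub_le {𝕜 : Type*} [NormedField 𝕜] {x y : 𝕜} (k : ℕ)
    (h : ‖y - x ^ 3‖ ≤ ‖x ^ 3‖ / 2) :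
    |((3 : ℝ) ^ (k + 1))⁻¹ * Real.log ‖y‖ - ((3 : ℝ) ^ k)⁻¹ * Real.log ‖x‖| ≤
      ((3 : ℝ) ^ k)⁻¹ := by
  have hlog := abs_log_norm_sub_log_norm_le h
  rw [norm_pow, Real.log_pow, Nat.cast_ofNat] at hlog
  have hsplit : ((3 : ℝ) ^ (k + 1))⁻¹ * Real.log ‖y‖ - ((3 : ℝ) ^ k)⁻¹ * Real.log ‖x‖ =
      ((3 : ℝ) ^ (k + 1))⁻¹ * (Real.log ‖y‖ - 3 * Real.log ‖x‖) := by
    rw [pow_succ]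
    field_simp
  have hlog2 : Real.log 2 ≤ 3 := by
    linarith [Real.log_le_sub_one_of_pos (zero_lt_two' ℝ)]
  rw [hsplit, abs_mul, abs_of_pos (by positivity), pow_succ, mul_inv]
  calc ((3 : ℝ) ^ k)⁻¹ * 3⁻¹ * |Real.log ‖y‖ - 3 * Real.log ‖x‖|
      ≤ ((3 : ℝ) ^ k)⁻¹ * 3⁻¹ * 3 := by gcongr; exact hlog.trans hlog2
    _ = ((3 : ℝ) ^ k)⁻¹ := by field_simp

theorem stmt11_general (r₀ : ℝ) (hr₀ : 0 < r₀) (a b : ℂ → ℂ)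
    (hamero : MeroAtZero a) (hbmero : MeroAtZero b)
    (c : ℕ → ℂ → ℂ)
    (hcrec : ∀ n t, c (n + 1) t = (c n t) ^ 3 - 3 * (a t) ^ 2 * (c n t) + b t)
    (γ : ℕ → ℤ) (hγ : ∀ n, HasOrdAtZero (c n) (-(γ n)))
    (hγtop : Tendsto γ atTop atTop) :
    ∃ r : ℝ, 0 < r ∧ r < r₀ ∧ ∃ g : ℂ → ℝ,
      TendstoUniformlyOn
        (fun (n : ℕ) (t : ℂ) =>
          ((3 : ℝ) ^ n)⁻¹ * Real.log ‖t ^ (γ n) * c n t‖)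
        g atTop {t : ℂ | 0 < ‖t‖ ∧ ‖t‖ < r} := by
  choose L hL0 hL using fun n => (hγ n).exists_tendsto_zpow_neg_mul
  simp only [neg_neg] at hL
  obtain ⟨N, hNa, hNb, hN⟩ := (hγtop.eventually (hamero.eventually_tendsto_zpow_mul.and
    (hbmero.eventually_tendsto_zpow_mul.and (eventually_gt_atTop 0)))).exists
  have hescape : ∀ᶠ t in 𝓝[≠] 0, InEscapeRegion (a t) (b t) (c N t) :=
    eventually_inEscapeRegion (hL N) (hL0 N) (tendsto_zpow_nhdsNE_zero_of_pos hN) hNa hNb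
  have hstep : ∀ t, InEscapeRegion (a t) (b t) (c N t) → ∀ k, N ≤ k →
      ‖c (k + 1) t - c k t ^ 3‖ ≤ ‖c k t ^ 3‖ / 2 := fun t ht k hk => by
    rw [hcrec]
    exact (InEscapeRegion.of_cubic_iterate (x := (c · t)) (fun n => hcrec n t) ht hk)
      |>.norm_cubic_sub_pow_three_le
  have hγ3 : ∀ k, N ≤ k → γ (k + 1) = 3 * γ k := fun k hk => by
    refine (eq_of_tendsto_zpow_mul_of_norm_sub_le (g := fun t => c k t ^ 3)
      (((hL k).pow 3).congr fun t => ?_) (pow_ne_zero 3 (hL0 k)) (hL (k + 1)) (hL0 (k + 1))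
      (hescape.mono fun t ht => hstep t ht k hk)).symm
    rw [mul_pow, zpow_three_mul]
  obtain ⟨ε, hε, hball⟩ := Metric.mem_nhdsWithin_iff.1 hescape
  refine ⟨min ε (r₀ / 2), by positivity, by linarith [min_le_right ε (r₀ / 2)], _,
    tendstoUniformlyOn_of_eventually_norm_sub_le (u := fun k => ((3 : ℝ) ^ k)⁻¹) ?_ ?_⟩
  · simpa only [inv_pow] using
      summable_geometric_of_lt_one (by norm_num) (by norm_num : (3 : ℝ)⁻¹ < 1)
  filter_upwards [eventually_ge_atTop N] with k hk t ⟨ht0, htr⟩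
  have ht : InEscapeRegion (a t) (b t) (c N t) :=
    hball ⟨mem_ball_zero_iff.2 (htr.trans_le (min_le_left _ _)), norm_pos_iff.1 ht0⟩
  have hcomp : ‖t ^ γ (k + 1) * c (k + 1) t - (t ^ γ k * c k t) ^ 3‖ ≤
      ‖(t ^ γ k * c k t) ^ 3‖ / 2 := by
    rw [hγ3 k hk, zpow_three_mul, mul_pow, ← mul_sub, norm_mul, norm_mul, mul_div_assoc]
    exact mul_le_mul_of_nonneg_left (hstep t ht k hk) (norm_nonneg _)
  exact abs_three_pow_inv_mul_log_norm_sub_le k hcomp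

theorem stmt11 (r₀ : ℝ) (hr₀ : 0 < r₀) (a b : ℂ → ℂ)
    (ha : DifferentiableOn ℂ a (ball 0 r₀ \ {0}))
    (hb : DifferentiableOn ℂ b (ball 0 r₀ \ {0}))
    (hamero : MeroAtZero a) (hbmero : MeroAtZero b)
    (c : ℕ → ℂ → ℂ) (hc0 : ∀ t, c 0 t = a t)
    (hcrec : ∀ n t, c (n + 1) t = (c n t) ^ 3 - 3 * (a t) ^ 2 * (c n t) + b t)
    (γ : ℕ → ℤ) (hγ : ∀ n, HasOrdAtZero (c n) (-(γ n)))
    (hγtop : Tendsto γ atTop atTop) :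
    ∃ r : ℝ, 0 < r ∧ r < r₀ ∧ ∃ g : ℂ → ℝ,
      TendstoUniformlyOn
        (fun (n : ℕ) (t : ℂ) =>
          ((3 : ℝ) ^ n)⁻¹ * Real.log ‖t ^ (γ n) * c n t‖)
        g atTop {t : ℂ | 0 < ‖t‖ ∧ ‖t‖ < r} :=
  stmt11_general r₀ hr₀ a b hamero hbmero c hcrec γ hγ hγtop
end EscapeRegion
end

section
/- In the meromorphic setting, suppose that every c_n is not identically zero and that γ_n → +∞ as n → ∞. Then for every sufficiently large integer n there exist r > 0 and a holomorphic, nowhere-vanishing function h on the disk {|t| < r} such that for all t with 0 < |t| < r one has G⁺(a(t), b(t)) + (γ_n/3^n)·log|t| = log|h(t)|, where G⁺(a,b) := lim_{m→∞} 3^{−m}·log⁺|f_{a,b}^m(a)|. (In particular, G⁺(a(t),b(t)) + (γ_n/3^n)·log|t| extends to a harmonic function in a neighbourhood of 0.) -/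
/-!
Once `γ n` is large, the pole of `c n` at `0` dominates `a` and `b`, so for small `t ≠ 0` the
number `‖c n t‖` is an escape radius of `f_{a(t),b(t)}`: the orbit `c (n + j) t` stays outside
that radius and `c (n + j + 1) = c (n + j) ^ 3 · w j` with `‖w j - 1‖ ≤ 1/2`. Telescoping gives
`G⁺ = 3⁻ⁿ (log ‖c n‖ + ∑ₖ 3^{-(k+1)} log ‖w k‖)`. Writing `c n = t^{-γ n} u` with `u` analytic and
nonvanishing at `0`, the quantity `3ⁿ (G⁺ + 3⁻ⁿ γ n log ‖t‖)` is the real part of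
`log u + ∑ₖ 3^{-(k+1)} log w k`; the series is holomorphic and bounded on the punctured disk, hence
extends across `0`, and `h` is the exponential of the sum divided by `3ⁿ`.
-/

open Filter Metric

/-- With these constants, for `R ≤ ‖z‖` both `‖β‖` and `‖3 α² z‖` are at most `‖z‖³ / 4`, and
`2 ≤ R` turns `‖f_{α,β} z‖ ≥ ‖z‖³ / 2` into `‖f_{α,β} z‖ ≥ ‖z‖`: the orbit of `z` never re-enters
the disk of radius `R`. -/
def IsEscapeRadius (α β : ℂ) (R : ℝ) : Prop :=
  2 ≤ R ∧ 12 * ‖α‖ ^ 2 ≤ R ^ 2 ∧ 4 * ‖β‖ ≤ R ^ 3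

namespace IsEscapeRadius

variable {α β z : ℂ} {R S : ℝ}

lemma mono (h : IsEscapeRadius α β R) (hRS : R ≤ S) : IsEscapeRadius α β S := by
  obtain ⟨h2, hα, hβ⟩ := h
  refine ⟨h2.trans hRS, hα.trans ?_, hβ.trans ?_⟩ <;> gcongr

lemma norm_fab_sub_pow_three_le (h : IsEscapeRadius α β ‖z‖) :
    ‖fab α β z - z ^ 3‖ ≤ ‖z‖ ^ 3 / 2 := by
  obtain ⟨-, hα, hβ⟩ := h
  calc ‖fab α β z - z ^ 3‖ = ‖β - 3 * α ^ 2 * z‖ := by rw [fab]; ring_nf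
    _ ≤ ‖β‖ + 3 * ‖α‖ ^ 2 * ‖z‖ := by
        refine (norm_sub_le _ _).trans_eq ?_
        rw [norm_mul, norm_mul, norm_pow, Complex.norm_ofNat]
    _ ≤ ‖z‖ ^ 3 / 4 + ‖z‖ ^ 2 / 4 * ‖z‖ := by gcongr <;> linarith
    _ = ‖z‖ ^ 3 / 2 := by ring

lemma norm_fab_div_pow_three_sub_one_le (h : IsEscapeRadius α β ‖z‖) :
    ‖fab α β z / z ^ 3 - 1‖ ≤ 1 / 2 := by
  have hz : z ≠ 0 := norm_pos_iff.1 (by linarith [h.1])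
  rw [← div_self (pow_ne_zero 3 hz), ← sub_div, norm_div, norm_pow,
    div_le_iff₀ (by positivity)]
  linarith [h.norm_fab_sub_pow_three_le]

lemma norm_le_norm_fab (h : IsEscapeRadius α β ‖z‖) : ‖z‖ ≤ ‖fab α β z‖ := by
  have hcube := norm_sub_norm_le (z ^ 3) (z ^ 3 - fab α β z)
  rw [sub_sub_cancel, norm_pow, norm_sub_rev] at hcube
  have h2 : 2 ≤ ‖z‖ := h.1
  nlinarith [h.norm_fab_sub_pow_three_le, mul_le_mul h2 h2 zero_le_two (norm_nonneg z)]

lemma iterate (h : IsEscapeRadius α β ‖z‖) (j : ℕ) :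
    IsEscapeRadius α β ‖(fab α β)^[j] z‖ := by
  induction j with
  | zero => exact h
  | succ j ih =>
    rw [Function.iterate_succ_apply']
    exact ih.mono ih.norm_le_norm_fab

end IsEscapeRadius

section Orbit

variable {a b : ℂ → ℂ} {c : ℕ → ℂ → ℂ}

lemma eq_iterate_fab (hc : ∀ j t, c (j + 1) t = fab (a t) (b t) (c j t)) (j : ℕ) (t : ℂ) :
    c j t = (fab (a t) (b t))^[j] (c 0 t) := by
  induction j with
  | zero => rfl
  | succ j ih => rw [hc, ih, Function.iterate_succ_apply']

lemma differentiableOn_of_eq_fab {s : Set ℂ} (ha : DifferentiableOn ℂ a s)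
    (hb : DifferentiableOn ℂ b s) (hc0 : DifferentiableOn ℂ (c 0) s)
    (hc : ∀ j t, c (j + 1) t = fab (a t) (b t) (c j t)) (j : ℕ) :
    DifferentiableOn ℂ (c j) s := by
  induction j with
  | zero => exact hc0
  | succ j ih =>
    rw [show c (j + 1) = _ from funext (hc j)]
    exact ((ih.pow 3).sub (((ha.pow 2).const_mul 3).mul ih)).add hb

end Orbit

lemma Complex.norm_log_le_of_norm_sub_one_le {w : ℂ} (hw : ‖w - 1‖ ≤ 1 / 2) :
    ‖Complex.log w‖ ≤ 3 / 4 := by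
  have h := Complex.norm_log_one_add_half_le_self hw
  rw [add_sub_cancel] at h
  linarith

lemma Complex.mem_slitPlane_of_norm_sub_one_le {w : ℂ} (hw : ‖w - 1‖ ≤ 1 / 2) :
    w ∈ Complex.slitPlane := by
  simpa using Complex.mem_slitPlane_of_norm_lt_one (hw.trans_lt one_half_lt_one)

open Finset in
lemma tendsto_inv_pow_mul_log_norm {d : ℕ} (hd : 1 < d) {z w : ℕ → ℂ} {C : ℝ}
    (hz : ∀ j, z (j + 1) = z j ^ d * w j) (hz0 : ∀ j, z j ≠ 0)
    (hw : ∀ j, |Real.log ‖w j‖| ≤ C) :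
    Tendsto (fun j => ((d : ℝ) ^ j)⁻¹ * Real.log ‖z j‖) atTop
      (nhds (Real.log ‖z 0‖ + ∑' k, ((d : ℝ) ^ (k + 1))⁻¹ * Real.log ‖w k‖)) := by
  have hd0 : (0 : ℝ) < d := by positivity
  have hsum : Summable fun k => ((d : ℝ) ^ (k + 1))⁻¹ * Real.log ‖w k‖ := by
    refine .of_norm_bounded ((summable_geometric_of_lt_one (by positivity)
      (inv_lt_one_of_one_lt₀ (by exact_mod_cast hd))).mul_left C) fun k => ?_
    rw [norm_mul, norm_inv, norm_pow, Real.norm_natCast, Real.norm_eq_abs, inv_pow, mul_comm]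
    gcongr
    · exact (abs_nonneg _).trans (hw 0)
    · exact hw k
    · exact_mod_cast hd.le
    · omega
  have htelescope : ∀ j, ((d : ℝ) ^ j)⁻¹ * Real.log ‖z j‖ =
      Real.log ‖z 0‖ + ∑ k ∈ range j, ((d : ℝ) ^ (k + 1))⁻¹ * Real.log ‖w k‖ := by
    intro j
    induction j with
    | zero => simp
    | succ j ih =>
      have hwj : w j ≠ 0 := right_ne_zero_of_mul (hz j ▸ hz0 (j + 1))
      rw [sum_range_succ, ← add_assoc, ← ih, hz, norm_mul, norm_pow, Real.log_mul
        (pow_ne_zero _ (norm_ne_zero_iff.2 (hz0 j))) (norm_ne_zero_iff.2 hwj), Real.log_pow]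
      field_simp
      ring
  exact (tendsto_const_nhds.add hsum.hasSum.tendsto_sum_nat).congr fun j => (htelescope j).symm

lemma IsEscapeRadius.tendsto_log_norm_iterate_fab {α β z : ℂ} (h : IsEscapeRadius α β ‖z‖) :
    Tendsto (fun j => ((3 : ℝ) ^ j)⁻¹ * max (Real.log ‖(fab α β)^[j] z‖) 0) atTop
      (nhds (Real.log ‖z‖ + ∑' k, ((3 : ℝ) ^ (k + 1))⁻¹ *
        Real.log ‖(fab α β)^[k + 1] z / (fab α β)^[k] z ^ 3‖)) := by
  have hne (j : ℕ) : (fab α β)^[j] z ≠ 0 := norm_pos_iff.1 (by linarith [(h.iterate j).1])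
  have hmax (j : ℕ) : max (Real.log ‖(fab α β)^[j] z‖) 0 = Real.log ‖(fab α β)^[j] z‖ :=
    max_eq_left (Real.log_nonneg (by linarith [(h.iterate j).1]))
  have hw (j : ℕ) : ‖(fab α β)^[j + 1] z / (fab α β)^[j] z ^ 3 - 1‖ ≤ 1 / 2 := by
    rw [Function.iterate_succ_apply']
    exact (h.iterate j).norm_fab_div_pow_three_sub_one_le
  simp only [hmax]
  simpa using tendsto_inv_pow_mul_log_norm (d := 3) (by norm_num) (C := 3 / 4)
    (fun j => (mul_div_cancel₀ _ (pow_ne_zero 3 (hne j))).symm) hne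
    (fun j => Complex.log_re _ ▸ (Complex.abs_re_le_norm _).trans
      (Complex.norm_log_le_of_norm_sub_one_le (hw j)))

lemma exists_differentiableOn_re_eq_tsum_mul_log_norm {s : Set ℂ} {x : ℂ} (hs : IsOpen s)
    (hx : x ∈ s) {w : ℕ → ℂ → ℂ} {ρ : ℕ → ℝ} (hρ : Summable ρ) (hρ0 : ∀ k, 0 ≤ ρ k)
    (hw : ∀ k, DifferentiableOn ℂ (w k) (s \ {x}))
    (hw1 : ∀ k, ∀ t ∈ s \ {x}, ‖w k t - 1‖ ≤ 1 / 2) :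
    ∃ F : ℂ → ℂ, DifferentiableOn ℂ F s ∧
      ∀ t ∈ s \ {x}, (F t).re = ∑' k, ρ k * Real.log ‖w k t‖ := by
  have hbound : ∀ k, ∀ t ∈ s \ {x}, ‖(ρ k : ℂ) * Complex.log (w k t)‖ ≤ 3 / 4 * ρ k := by
    intro k t ht
    rw [norm_mul, Complex.norm_real, Real.norm_of_nonneg (hρ0 k), mul_comm]
    exact mul_le_mul_of_nonneg_right
      (Complex.norm_log_le_of_norm_sub_one_le (hw1 k t ht)) (hρ0 k)
  set f : ℂ → ℂ := fun t => ∑' k, (ρ k : ℂ) * Complex.log (w k t)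
  have hf : DifferentiableOn ℂ f (s \ {x}) :=
    Complex.differentiableOn_tsum_of_summable_norm (hρ.mul_left _)
      (fun k => (differentiableOn_const _).mul ((hw k).clog
        fun t ht => Complex.mem_slitPlane_of_norm_sub_one_le (hw1 k t ht)))
      (hs.sdiff isClosed_singleton) hbound
  have hf_bdd : BddAbove (norm ∘ f '' (s \ {x})) := by
    refine ⟨∑' k, 3 / 4 * ρ k, ?_⟩
    rintro _ ⟨t, ht, rfl⟩
    exact tsum_of_norm_bounded (hρ.mul_left _).hasSum fun k => hbound k t ht
  refine ⟨Function.update f x (limUnder (nhdsWithin x {x}ᶜ) f),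
    Complex.differentiableOn_update_limUnder_of_bddAbove (hs.mem_nhds hx) hf hf_bdd,
    fun t ht => ?_⟩
  rw [Function.update_of_ne ht.2,
    Complex.re_tsum (.of_norm_bounded (hρ.mul_left _) fun k => hbound k t ht)]
  simp only [Complex.re_ofReal_mul, Complex.log_re]

lemma AnalyticAt.exists_eventually_exp_eq {u : ℂ → ℂ} {x : ℂ} (hu : AnalyticAt ℂ u x)
    (hx : u x ≠ 0) :
    ∃ L : ℂ → ℂ, ∀ᶠ t in nhds x, DifferentiableAt ℂ L t ∧ Complex.exp (L t) = u t := by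
  have hslit : ∀ᶠ t in nhds x, u t / u x ∈ Complex.slitPlane := by
    refine (hu.continuousAt.div_const (u x)).eventually
      (Complex.isOpen_slitPlane.mem_nhds ?_)
    simp [div_self hx]
  refine ⟨fun t => Complex.log (u x) + Complex.log (u t / u x), ?_⟩
  filter_upwards [hu.eventually_analyticAt, hslit] with t hut hsl
  refine ⟨(differentiableAt_const _).add ((hut.differentiableAt.div_const _).clog hsl), ?_⟩
  rw [Complex.exp_add, Complex.exp_log hx, Complex.exp_log (Complex.slitPlane_ne_zero hsl),
    mul_div_cancel₀ _ hx]

lemma Metric.exists_ball_forall_of_eventually {X : Type*} [PseudoMetricSpace X] {x : X}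
    {p q : X → Prop} (hp : ∀ᶠ t in nhds x, p t) (hq : ∀ᶠ t in nhdsWithin x {x}ᶜ, q t)
    {r₀ : ℝ} (hr₀ : 0 < r₀) :
    ∃ r, 0 < r ∧ r ≤ r₀ ∧ ∀ t ∈ ball x r, p t ∧ (t ≠ x → q t) := by
  obtain ⟨r, hr, h⟩ :=
    Metric.eventually_nhds_iff_ball.1 (hp.and (eventually_nhdsWithin_iff.1 hq))
  exact ⟨min r r₀, lt_min hr hr₀, min_le_right _ _,
    fun t ht => h t (ball_subset_ball (min_le_left _ _) ht)⟩

lemma HasOrdAtZero.meromorphicAt {g : ℂ → ℂ} {d : ℤ} (h : HasOrdAtZero g d) :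
    MeromorphicAt g 0 := by
  obtain ⟨u, hu, -, hg⟩ := h
  exact (((MeromorphicAt.id 0).zpow d).mul hu.meromorphicAt).congr (hg.mono fun t ht => ht.symm)

lemma HasOrdAtZero.meromorphicOrderAt_eq {g : ℂ → ℂ} {d : ℤ} (h : HasOrdAtZero g d) :
    meromorphicOrderAt g 0 = d := by
  obtain ⟨u, hu, hu0, hg⟩ := id h
  exact (meromorphicOrderAt_eq_int_iff h.meromorphicAt).2 ⟨u, hu, hu0, by simpa using hg⟩

lemma MeroAtZero.meromorphicAt {g : ℂ → ℂ} (h : MeroAtZero g) : MeromorphicAt g 0 := by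
  rcases h with ⟨d, hd⟩ | hzero
  · exact hd.meromorphicAt
  · exact (MeromorphicAt.const 0 0).congr (hzero.mono fun t ht => ht.symm)

lemma eventually_isEscapeRadius {a b c : ℂ → ℂ} {x : ℂ} {k : ℤ} (ha : MeromorphicAt a x)
    (hb : MeromorphicAt b x) (hc : MeromorphicAt c x) (hck : meromorphicOrderAt c x = k)
    (hk : k < 0) (hak : (k : WithTop ℤ) < meromorphicOrderAt a x)
    (hbk : ((3 * k : ℤ) : WithTop ℤ) < meromorphicOrderAt b x) :
    ∀ᶠ t in nhdsWithin x {x}ᶜ, IsEscapeRadius (a t) (b t) ‖c t‖ := by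
  have hc_large : ∀ᶠ t in nhdsWithin x {x}ᶜ, 2 ≤ ‖c t‖ :=
    (tendsto_norm_atTop_iff_cobounded.2 (tendsto_cobounded_of_meromorphicOrderAt_neg
      (by simpa [hck] using hk))).eventually_ge_atTop 2
  have ha_small : ∀ᶠ t in nhdsWithin x {x}ᶜ, ‖a t / c t‖ < 1 / 4 := by
    refine (tendsto_zero_of_meromorphicOrderAt_pos (f := a / c) ?_).norm.eventually_lt_const
      (by norm_num : ‖(0 : ℂ)‖ < 1 / 4)
    rw [meromorphicOrderAt_div ha hc, hck, LinearOrderedAddCommGroupWithTop.sub_pos]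
    exact .inl hak
  have hb_small : ∀ᶠ t in nhdsWithin x {x}ᶜ, ‖b t / c t ^ 3‖ < 1 / 4 := by
    refine (tendsto_zero_of_meromorphicOrderAt_pos (f := b / c ^ 3) ?_).norm.eventually_lt_const
      (by norm_num : ‖(0 : ℂ)‖ < 1 / 4)
    rw [meromorphicOrderAt_div hb (hc.pow 3), meromorphicOrderAt_pow hc, hck,
      LinearOrderedAddCommGroupWithTop.sub_pos]
    exact .inl (by exact_mod_cast hbk)
  filter_upwards [hc_large, ha_small, hb_small] with t h2 hat hbt
  have hct : 0 < ‖c t‖ := by linarith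
  rw [norm_div, div_lt_iff₀ hct] at hat
  rw [norm_div, norm_pow, div_lt_iff₀ (by positivity)] at hbt
  exact ⟨h2, by nlinarith [norm_nonneg (a t)], by linarith⟩

lemma eventually_atTop_eventually_isEscapeRadius {a b : ℂ → ℂ} {c : ℕ → ℂ → ℂ} {γ : ℕ → ℤ}
    {x : ℂ} (ha : MeromorphicAt a x) (hb : MeromorphicAt b x) (hc : ∀ n, MeromorphicAt (c n) x)
    (hcγ : ∀ n, meromorphicOrderAt (c n) x = ((-γ n : ℤ) : WithTop ℤ))
    (hγ : Tendsto γ atTop atTop) :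
    ∀ᶠ n in atTop, ∀ᶠ t in nhdsWithin x {x}ᶜ, IsEscapeRadius (a t) (b t) ‖c n t‖ := by
  have hbelow (o : WithTop ℤ) : ∃ k : ℤ, (k : WithTop ℤ) ≤ o := by
    cases o with
    | top => exact ⟨0, le_top⟩
    | coe k => exact ⟨k, le_rfl⟩
  obtain ⟨ka, hka⟩ := hbelow (meromorphicOrderAt a x)
  obtain ⟨kb, hkb⟩ := hbelow (meromorphicOrderAt b x)
  filter_upwards [hγ.eventually_gt_atTop 0, hγ.eventually_gt_atTop (-ka),
    hγ.eventually_gt_atTop (-kb)] with n hn0 hna hnb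
  refine eventually_isEscapeRadius ha hb (hc n) (hcγ n) (by omega) ?_ ?_
  · exact lt_of_lt_of_le (by exact_mod_cast (by omega : -γ n < ka)) hka
  · exact lt_of_lt_of_le (by exact_mod_cast (by omega : 3 * -γ n < kb)) hkb

theorem exists_differentiableOn_tendsto_log_norm_of_isEscapeRadius {r₀ : ℝ} (hr₀ : 0 < r₀)
    {a b : ℂ → ℂ} {c : ℕ → ℂ → ℂ} {γ : ℤ}
    (hcd : ∀ j, DifferentiableOn ℂ (c j) (ball 0 r₀ \ {0}))
    (hc : ∀ j t, c (j + 1) t = fab (a t) (b t) (c j t)) (hγ : HasOrdAtZero (c 0) (-γ))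
    (hesc : ∀ᶠ t in nhdsWithin 0 {0}ᶜ, IsEscapeRadius (a t) (b t) ‖c 0 t‖) :
    ∃ r, 0 < r ∧ r ≤ r₀ ∧ ∃ g : ℂ → ℂ, DifferentiableOn ℂ g (ball 0 r) ∧
      ∀ t ∈ ball (0 : ℂ) r \ {0},
        Tendsto (fun j => ((3 : ℝ) ^ j)⁻¹ * max (Real.log ‖c j t‖) 0) atTop
          (nhds ((g t).re - γ * Real.log ‖t‖)) := by
  obtain ⟨u, hu, hu0, hcu⟩ := hγ
  obtain ⟨L, hL⟩ := hu.exists_eventually_exp_eq hu0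
  obtain ⟨r, hr, hrr₀, hball⟩ := Metric.exists_ball_forall_of_eventually hL (hcu.and hesc) hr₀
  set U := ball (0 : ℂ) r \ {0}
  have hU : U ⊆ ball 0 r₀ \ {0} := Set.sdiff_subset_sdiff_left (ball_subset_ball hrr₀)
  have hescape : ∀ t ∈ U, ∀ j, IsEscapeRadius (a t) (b t) ‖c j t‖ := fun t ht j =>
    eq_iterate_fab hc j t ▸ ((hball t ht.1).2 ht.2).2.iterate j
  have hne : ∀ t ∈ U, ∀ j, c j t ≠ 0 := fun t ht j =>
    norm_pos_iff.1 (by linarith [(hescape t ht j).1])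
  set w : ℕ → ℂ → ℂ := fun j t => c (j + 1) t / c j t ^ 3
  have hw1 : ∀ j, ∀ t ∈ U, ‖w j t - 1‖ ≤ 1 / 2 := fun j t ht => by
    simpa only [w, hc] using (hescape t ht j).norm_fab_div_pow_three_sub_one_le
  have hwd : ∀ j, DifferentiableOn ℂ (w j) U := fun j =>
    ((hcd _).mono hU).div (((hcd _).mono hU).pow 3) fun t ht => pow_ne_zero 3 (hne t ht j)
  have hρ : Summable fun k => ((3 : ℝ) ^ (k + 1))⁻¹ := by
    simpa [← inv_pow] using (summable_nat_add_iff 1).2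
      (summable_geometric_of_lt_one (by norm_num : (0 : ℝ) ≤ 3⁻¹) (by norm_num))
  obtain ⟨F, hF, hFre⟩ := exists_differentiableOn_re_eq_tsum_mul_log_norm isOpen_ball
    (mem_ball_self hr) hρ (fun k => by positivity) hwd hw1
  have hLd : DifferentiableOn ℂ L (ball 0 r) := fun t ht =>
    (hball t ht).1.1.differentiableWithinAt
  refine ⟨r, hr, hrr₀, L + F, hLd.add hF, fun t ht => ?_⟩
  have hc0 : Real.log ‖c 0 t‖ = (L t).re - γ * Real.log ‖t‖ := by
    obtain ⟨⟨-, hexp⟩, hct⟩ := hball t ht.1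
    have ht0 : ‖t‖ ≠ 0 := norm_ne_zero_iff.2 ht.2
    rw [(hct ht.2).1, ← hexp, norm_mul, norm_zpow, Complex.norm_exp,
      Real.log_mul (zpow_ne_zero _ ht0) (Real.exp_pos _).ne', Real.log_zpow, Real.log_exp]
    push_cast
    ring
  have hlim := ((hball t ht.1).2 ht.2).2.tendsto_log_norm_iterate_fab
  simp only [← eq_iterate_fab hc] at hlim
  convert hlim using 2
  rw [Pi.add_apply, Complex.add_re, hFre t ht, hc0]
  ring

theorem stmt12_general (r₀ : ℝ) (hr₀ : 0 < r₀) (a b : ℂ → ℂ)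
    (ha : DifferentiableOn ℂ a (ball 0 r₀ \ {0}))
    (hb : DifferentiableOn ℂ b (ball 0 r₀ \ {0}))
    (hbmero : MeroAtZero b)
    (c : ℕ → ℂ → ℂ) (hc0 : ∀ t, c 0 t = a t)
    (hcrec : ∀ n t, c (n + 1) t = (c n t) ^ 3 - 3 * (a t) ^ 2 * (c n t) + b t)
    (γ : ℕ → ℤ) (hγ : ∀ n, HasOrdAtZero (c n) (-(γ n)))
    (hγtop : Tendsto γ atTop atTop)
    (G : ℂ → ℂ → ℝ)
    (hG : ∀ x y : ℂ, Tendsto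
      (fun m : ℕ => ((3 : ℝ) ^ m)⁻¹ * max (Real.log ‖(fab x y)^[m] x‖) 0)
      atTop (nhds (G x y))) :
    ∃ N : ℕ, ∀ n, N ≤ n → ∃ r : ℝ, 0 < r ∧ r ≤ r₀ ∧ ∃ h : ℂ → ℂ,
      DifferentiableOn ℂ h (ball 0 r) ∧ (∀ t ∈ ball (0 : ℂ) r, h t ≠ 0) ∧
      ∀ t : ℂ, 0 < ‖t‖ → ‖t‖ < r →
        G (a t) (b t) + ((γ n : ℝ) / 3 ^ n) * Real.log ‖t‖ =
          Real.log ‖h t‖ := by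
  have hca : c 0 = a := funext hc0
  have hcd := differentiableOn_of_eq_fab ha hb (hca ▸ ha) hcrec
  obtain ⟨N, hN⟩ := eventually_atTop.1 <| eventually_atTop_eventually_isEscapeRadius
    (hca ▸ hγ 0).meromorphicAt hbmero.meromorphicAt (fun n => (hγ n).meromorphicAt)
    (fun n => (hγ n).meromorphicOrderAt_eq) hγtop
  refine ⟨N, fun n hn => ?_⟩
  obtain ⟨r, hr, hrr₀, g, hg, hlim⟩ :=
    exists_differentiableOn_tendsto_log_norm_of_isEscapeRadius hr₀ (c := fun j => c (n + j))
      (fun j => hcd _) (fun j t => hcrec (n + j) t) (hγ n) (hN n hn)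
  refine ⟨r, hr, hrr₀, fun t => Complex.exp (g t / ((3 : ℝ) ^ n : ℝ)),
    (hg.div_const _).cexp, fun t _ => Complex.exp_ne_zero _, fun t ht0 htr => ?_⟩
  have hiter (m : ℕ) : (fab (a t) (b t))^[m] (a t) = c m t := by
    rw [eq_iterate_fab hcrec, hc0]
  have hGlim := (tendsto_add_atTop_iff_nat n).2 (hG (a t) (b t))
  simp only [hiter] at hGlim
  have ht : t ∈ ball 0 r \ {0} := ⟨mem_ball_zero_iff.2 htr, norm_pos_iff.1 ht0⟩
  have hG_eq : G (a t) (b t) = ((3 : ℝ) ^ n)⁻¹ * ((g t).re - γ n * Real.log ‖t‖) := by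
    refine tendsto_nhds_unique hGlim (((hlim t ht).const_mul ((3 : ℝ) ^ n)⁻¹).congr fun j => ?_)
    rw [add_comm j n, pow_add, mul_inv]
    ring
  rw [hG_eq, Complex.norm_exp, Real.log_exp, Complex.div_ofReal_re]
  field_simp
  ring

theorem stmt12 (r₀ : ℝ) (hr₀ : 0 < r₀) (a b : ℂ → ℂ)
    (ha : DifferentiableOn ℂ a (ball 0 r₀ \ {0}))
    (hb : DifferentiableOn ℂ b (ball 0 r₀ \ {0}))
    (hamero : MeroAtZero a) (hbmero : MeroAtZero b)
    (c : ℕ → ℂ → ℂ) (hc0 : ∀ t, c 0 t = a t)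
    (hcrec : ∀ n t, c (n + 1) t = (c n t) ^ 3 - 3 * (a t) ^ 2 * (c n t) + b t)
    (γ : ℕ → ℤ) (hγ : ∀ n, HasOrdAtZero (c n) (-(γ n)))
    (hγtop : Tendsto γ atTop atTop)
    (G : ℂ → ℂ → ℝ)
    (hG : ∀ x y : ℂ, Tendsto
      (fun m : ℕ => ((3 : ℝ) ^ m)⁻¹ * max (Real.log ‖(fab x y)^[m] x‖) 0)
      atTop (nhds (G x y))) :
    ∃ N : ℕ, ∀ n, N ≤ n → ∃ r : ℝ, 0 < r ∧ r ≤ r₀ ∧ ∃ h : ℂ → ℂ,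
      DifferentiableOn ℂ h (ball 0 r) ∧ (∀ t ∈ ball (0 : ℂ) r, h t ≠ 0) ∧
      ∀ t : ℂ, 0 < ‖t‖ → ‖t‖ < r →
        G (a t) (b t) + ((γ n : ℝ) / 3 ^ n) * Real.log ‖t‖ =
          Real.log ‖h t‖ :=
  stmt12_general r₀ hr₀ a b ha hb hbmero c hc0 hcrec γ hγ hγtop G hG
end

section
/- Let γ ≥ 1 be an integer, let b̃ ∈ ℂ[[t]] be a formal power series with constant coefficient 2, and let (z_n)_{n≥1} be a sequence of formal power series in ℂ[[t]], each with nonzero constant coefficient, satisfying t^{2γ}·z_{n+1} = z_n³ − 3z_n + b̃ for all n ≥ 1. Write x_{n,i} for the coefficient of t^i in z_n. Then: (i) for every n ≥ 1, the constant coefficient x_{n,0} satisfies x_{n,0}³ − 3x_{n,0} + 2 = 0 (hence x_{n,0} ∈ {1, −2}); and (ii) there exists a finite set T ⊂ ℂ such that x_{n,i} ∈ T for all n ≥ 1 and all 0 ≤ i ≤ γ. -/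
/-!
Write `F(w) = w³ - 3w + b̃`. Constant terms of `t^(2γ) z_{n+1} = F(z_n)` give (i), and the
coefficient of `t^(2γ)` in `F(z_n)` is `x_{n+1,0} ∈ {1, -2}`. Since `F(w) - F(w') = (w - w')·g` with
`g = w² + ww' + w'² - 3`, two such solutions agree modulo `t^(2γ - ord g)`. If `w(0) = -2` then
`g(0) = 9`, so `w` is unique modulo `t^(2γ)`. If `w = 1 + a t^v + …` with `1 ≤ v ≤ γ` and `a ≠ 0`,
then `ord g = v` for any `w'` with the same leading term, so `(v, a)` determines `w` modulo
`t^(γ+1)`; and the coefficient of `t^(2v)` in `F(w)` is `3a² + b̃_{2v} ∈ {0, 1, -2}`, which leaves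
finitely many `a`.
-/
open PowerSeries

theorem Set.Finite.image_of_cover {α β ι : Type*} {s : Set α} {f : α → β} {I : Set ι}
    {P : ι → Set α} (hI : I.Finite) (hs : s ⊆ ⋃ i ∈ I, P i)
    (hP : ∀ i ∈ I, (f '' (s ∩ P i)).Subsingleton) : (f '' s).Finite := by
  refine (hI.biUnion fun i hi => (hP i hi).finite).subset ?_
  rintro _ ⟨x, hx, rfl⟩
  obtain ⟨i, hi, hxi⟩ := Set.mem_iUnion₂.mp (hs hx)
  exact Set.mem_biUnion hi ⟨x, ⟨hx, hxi⟩, rfl⟩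

theorem Set.Finite.setOf_three_mul_sq_add_mem {R : Type*} [CommRing R] [IsDomain R] [CharZero R]
    (β : R) {D : Set R} (hD : D.Finite) : {a : R | 3 * a ^ 2 + β ∈ D}.Finite := by
  refine hD.preimage' fun δ _ => ?_
  have hp : (Polynomial.C 3 * Polynomial.X ^ 2 + Polynomial.C (β - δ) : Polynomial R) ≠ 0 := by
    intro h
    simpa using congrArg (Polynomial.coeff · 2) h
  refine (Polynomial.finite_setOfPred_isRoot hp).subset fun a (ha : 3 * a ^ 2 + β = δ) => ?_
  simp only [Set.mem_ofPred_eq, Polynomial.IsRoot, Polynomial.eval_add, Polynomial.eval_mul,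
    Polynomial.eval_pow, Polynomial.eval_C, Polynomial.eval_X]
  linear_combination ha

namespace PowerSeries

variable {R : Type*}

theorem X_pow_dvd_iff_le_order [Semiring R] {n : ℕ} {φ : R⟦X⟧} :
    X ^ n ∣ φ ↔ (n : ℕ∞) ≤ φ.order := by
  rw [order_eq_emultiplicity_X, pow_dvd_iff_le_emultiplicity]

theorem X_pow_dvd_of_X_pow_add_dvd_mul [Semiring R] [NoZeroDivisors R] {φ ψ : R⟦X⟧} {n v : ℕ}
    (hψ : ψ.order = v) (h : X ^ (n + v) ∣ φ * ψ) : X ^ n ∣ φ := by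
  rw [X_pow_dvd_iff_le_order, order_mul, hψ, Nat.cast_add] at h
  exact X_pow_dvd_iff_le_order.mpr ((ENat.add_le_add_iff_right (ENat.natCast_ne_top v)).mp h)

theorem X_pow_succ_dvd_sub [Ring R] {φ ψ χ : R⟦X⟧} {v : ℕ} (hφ : X ^ v ∣ φ - χ)
    (hψ : X ^ v ∣ ψ - χ) (h : coeff v φ = coeff v ψ) : X ^ (v + 1) ∣ φ - ψ := by
  rw [X_pow_dvd_iff] at hφ hψ ⊢
  intro m hm
  rcases Nat.lt_succ_iff_lt_or_eq.mp hm with hm | rfl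
  · rw [← sub_sub_sub_cancel_right φ ψ χ, map_sub, hφ m hm, hψ m hm, sub_zero]
  · rw [map_sub, h, sub_self]

theorem order_eq_zero_of_constantCoeff_ne_zero [Semiring R] {φ : R⟦X⟧}
    (h : constantCoeff φ ≠ 0) : φ.order = 0 := by
  simpa using (order_ne_zero_iff_constCoeff_eq_zero (φ := φ)).not.mpr h

end PowerSeries

section Cubic

variable {R : Type*} [CommRing R] {b w w' : R⟦X⟧}

theorem eq_one_or_eq_neg_two_of_cubic_eq_zero [IsDomain R] {x : R}
    (h : x ^ 3 - 3 * x + 2 = 0) : x = 1 ∨ x = -2 := by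
  have : (x - 1) ^ 2 * (x + 2) = 0 := by linear_combination h
  rcases mul_eq_zero.mp this with h1 | h2
  · exact Or.inl (sub_eq_zero.mp (pow_eq_zero_iff two_ne_zero |>.mp h1))
  · exact Or.inr (eq_neg_of_add_eq_zero_left h2)

theorem cubic_coeff_zero_eq_zero {N : ℕ} (hN : N ≠ 0) (h : X ^ N ∣ w ^ 3 - 3 * w + b) :
    coeff 0 w ^ 3 - 3 * coeff 0 w + coeff 0 b = 0 := by
  simpa [map_ofNat] using X_pow_dvd_iff.mp h 0 (Nat.pos_of_ne_zero hN)

theorem coeff_two_mul_cubic {v : ℕ} (hv : v ≠ 0) (hw : X ^ v ∣ w - 1) :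
    coeff (2 * v) (w ^ 3 - 3 * w + b) = 3 * coeff v w ^ 2 + coeff (2 * v) b := by
  obtain ⟨p, hp⟩ := hw
  obtain rfl : w = X ^ v * p + 1 := sub_eq_iff_eq_add.mp hp
  have : (X ^ v * p + 1) ^ 3 - 3 * (X ^ v * p + 1) + b
      = X ^ (2 * v) * (X ^ v * p ^ 3 + C 3 * p ^ 2) + (b - C 2) := by
    simp only [map_ofNat]
    ring
  rw [this]
  simp [coeff_X_pow_mul', coeff_one, coeff_C, hv]

theorem order_cubic_quotient_eq_zero [CharZero R] (hw : coeff 0 w = -2)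
    (hw' : coeff 0 w' = -2) : (w ^ 2 + w * w' + w' ^ 2 - 3).order = 0 := by
  apply order_eq_zero_of_constantCoeff_ne_zero
  simp only [coeff_zero_eq_constantCoeff_apply] at hw hw'
  norm_num [hw, hw', map_ofNat]

theorem order_cubic_quotient_eq [IsDomain R] [CharZero R] {v : ℕ} (hv : v ≠ 0)
    (hw : X ^ v ∣ w - 1) (hw' : X ^ v ∣ w' - 1) (h : coeff v w = coeff v w')
    (ha : coeff v w ≠ 0) : (w ^ 2 + w * w' + w' ^ 2 - 3).order = (v : ℕ∞) := by
  obtain ⟨p, hp⟩ := hw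
  obtain ⟨p', hp'⟩ := hw'
  obtain rfl : w = X ^ v * p + 1 := sub_eq_iff_eq_add.mp hp
  obtain rfl : w' = X ^ v * p' + 1 := sub_eq_iff_eq_add.mp hp'
  have hcoeff (q : R⟦X⟧) : coeff v (X ^ v * q + 1) = constantCoeff q := by
    simp [coeff_X_pow_mul', coeff_one, hv]
  rw [hcoeff, hcoeff] at h
  rw [hcoeff] at ha
  have : (X ^ v * p + 1) ^ 2 + (X ^ v * p + 1) * (X ^ v * p' + 1) + (X ^ v * p' + 1) ^ 2 - 3
      = X ^ v * (X ^ v * (p ^ 2 + p * p' + p' ^ 2) + 3 * (p + p')) := by ring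
  rw [this, order_mul, order_X_pow, order_eq_zero_of_constantCoeff_ne_zero, add_zero]
  simpa [hv, ← h, map_ofNat] using ha

theorem X_pow_dvd_sub_of_dvd_cubic [IsDomain R] {N v : ℕ}
    (hF : X ^ (N + v) ∣ w ^ 3 - 3 * w + b) (hF' : X ^ (N + v) ∣ w' ^ 3 - 3 * w' + b)
    (hg : (w ^ 2 + w * w' + w' ^ 2 - 3).order = (v : ℕ∞)) : X ^ N ∣ w - w' :=
  X_pow_dvd_of_X_pow_add_dvd_mul hg <| by
    convert dvd_sub hF hF' using 1
    ring

end Cubic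

section Solutions

variable {R : Type*} [CommRing R]

def cubicSolutions (γ : ℕ) (b : R⟦X⟧) (D : Set R) : Set R⟦X⟧ :=
  {w | X ^ (2 * γ) ∣ w ^ 3 - 3 * w + b ∧ coeff (2 * γ) (w ^ 3 - 3 * w + b) ∈ D}

def leadingTerms (γ : ℕ) (b : R⟦X⟧) (D : Set R) : Set (ℕ × R) :=
  {(0, -2), (γ, 0)} ∪
    {σ | σ.1 ≠ 0 ∧ σ.1 ≤ γ ∧ σ.2 ≠ 0 ∧ 3 * σ.2 ^ 2 + coeff (2 * σ.1) b ∈ insert 0 D}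

/-- For `v ≠ 0` this is the class of the `w ≡ 1 + a t^v mod t^(v+1)`; for `v = 0` it is
`{w | w(0) = a}`. -/
def leadingTermClass (σ : ℕ × R) : Set R⟦X⟧ :=
  {w | X ^ σ.1 ∣ w - 1 ∧ coeff σ.1 w = σ.2}

theorem finite_leadingTerms [IsDomain R] [CharZero R] (γ : ℕ) (b : R⟦X⟧) {D : Set R}
    (hD : D.Finite) : (leadingTerms γ b D).Finite := by
  refine (Set.toFinite _).union <| ((Set.finite_Iic γ).prod <| (Set.finite_Iic γ).biUnion
    fun v _ => Set.Finite.setOf_three_mul_sq_add_mem (coeff (2 * v) b) (hD.insert 0)).subset ?_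
  rintro ⟨v, a⟩ ⟨-, hvγ, -, ha⟩
  exact ⟨hvγ, Set.mem_biUnion hvγ ha⟩

theorem exists_mem_leadingTerms [IsDomain R] {γ : ℕ} {b w : R⟦X⟧} {D : Set R} (hγ : γ ≠ 0)
    (hb : coeff 0 b = 2) (hw : w ∈ cubicSolutions γ b D) :
    ∃ σ ∈ leadingTerms γ b D, w ∈ leadingTermClass σ := by
  obtain ⟨hdvd, hD⟩ := hw
  have h0 := cubic_coeff_zero_eq_zero (by omega) hdvd
  rw [hb] at h0
  rcases eq_one_or_eq_neg_two_of_cubic_eq_zero h0 with h1 | h2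
  swap
  · exact ⟨(0, -2), by simp [leadingTerms], by simp, h2⟩
  by_cases htop : X ^ (γ + 1) ∣ w - 1
  · refine ⟨(γ, 0), by simp [leadingTerms], (pow_dvd_pow X γ.le_succ).trans htop, ?_⟩
    simpa [coeff_one, hγ] using X_pow_dvd_iff.mp htop γ γ.lt_succ_self
  set u := w - 1 with hu
  have hne : u ≠ 0 := fun h => htop (h ▸ dvd_zero _)
  set v := u.order.toNat
  have hv : X ^ v ∣ u := X_pow_order_dvd
  have hvγ : v ≤ γ := by
    by_contra! h
    exact htop ((pow_dvd_pow X h).trans hv)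
  have hu0 : coeff v u ≠ 0 := coeff_order hne
  have hv0 : v ≠ 0 := by
    intro h
    rw [h, hu, map_sub, h1, coeff_one, if_pos rfl, sub_self] at hu0
    exact hu0 rfl
  have ha : coeff v w ≠ 0 := by
    rwa [hu, map_sub, coeff_one, if_neg hv0, sub_zero] at hu0
  refine ⟨(v, coeff v w), Or.inr ⟨hv0, hvγ, ha, ?_⟩, hv, rfl⟩
  rw [← coeff_two_mul_cubic hv0 hv]
  rcases hvγ.lt_or_eq with hlt | rfl
  · exact Or.inl (X_pow_dvd_iff.mp hdvd _ (by omega))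
  · exact Or.inr hD

theorem X_pow_succ_dvd_sub_of_mem_leadingTermClass [IsDomain R] [CharZero R] {γ : ℕ}
    {b w w' : R⟦X⟧} {D : Set R} {σ : ℕ × R} (hγ : γ ≠ 0) (hσ : σ ∈ leadingTerms γ b D)
    (hw : w ∈ cubicSolutions γ b D) (hw' : w' ∈ cubicSolutions γ b D)
    (hwσ : w ∈ leadingTermClass σ) (hw'σ : w' ∈ leadingTermClass σ) :
    X ^ (γ + 1) ∣ w - w' := by
  obtain ⟨v, a⟩ := σ
  obtain ⟨hwv, hwa⟩ := hwσ
  obtain ⟨hw'v, hw'a⟩ := hw'σ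
  dsimp only at hwv hwa hw'v hw'a
  have hcoeff : coeff v w = coeff v w' := hwa.trans hw'a.symm
  have hagree : X ^ (v + 1) ∣ w - w' := X_pow_succ_dvd_sub hwv hw'v hcoeff
  rcases hσ with h | ⟨hv0, hvγ, ha, -⟩
  · simp only [Set.mem_insert_iff, Set.mem_singleton_iff, Prod.mk.injEq] at h
    rcases h with ⟨rfl, h⟩ | ⟨rfl, -⟩
    · have hg := order_cubic_quotient_eq_zero (hwa.trans h) (hw'a.trans h)
      exact (pow_dvd_pow X (show γ + 1 ≤ 2 * γ by omega)).trans
        (X_pow_dvd_sub_of_dvd_cubic (N := 2 * γ) hw.1 hw'.1 hg)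
    · exact hagree
  · dsimp only at hv0 hvγ ha
    have hg := order_cubic_quotient_eq hv0 hwv hw'v hcoeff (hwa ▸ ha)
    have hF := hw.1
    have hF' := hw'.1
    rw [← Nat.sub_add_cancel (show v ≤ 2 * γ by omega)] at hF hF'
    have := X_pow_dvd_sub_of_dvd_cubic hF hF' hg
    rcases hvγ.lt_or_eq with hlt | rfl
    · exact (pow_dvd_pow X (by omega)).trans this
    · exact hagree

theorem finite_coeff_image_cubicSolutions [IsDomain R] [CharZero R] {γ : ℕ} {b : R⟦X⟧}
    {D : Set R} (hγ : γ ≠ 0) (hb : coeff 0 b = 2) (hD : D.Finite) {i : ℕ} (hi : i ≤ γ) :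
    (coeff i '' cubicSolutions γ b D).Finite := by
  refine (finite_leadingTerms γ b hD).image_of_cover
    (fun w hw => by simpa using exists_mem_leadingTerms hγ hb hw) ?_
  rintro σ hσ _ ⟨w, ⟨hw, hwσ⟩, rfl⟩ _ ⟨w', ⟨hw', hw'σ⟩, rfl⟩
  have := X_pow_dvd_iff.mp
    (X_pow_succ_dvd_sub_of_mem_leadingTermClass hγ hσ hw hw' hwσ hw'σ) i (by omega)
  rwa [map_sub, sub_eq_zero] at this

end Solutions

theorem stmt15_general (γ : ℕ) (hγ : 1 ≤ γ) (btilde : PowerSeries ℂ)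
    (hb : PowerSeries.coeff 0 btilde = 2)
    (z : ℕ → PowerSeries ℂ)
    (hrec : ∀ n, (PowerSeries.X : PowerSeries ℂ) ^ (2 * γ) * z (n + 1) =
      (z n) ^ 3 - 3 * z n + btilde) :
    (∀ n, (PowerSeries.coeff 0 (z n)) ^ 3 - 3 * (PowerSeries.coeff 0 (z n)) + 2 = 0) ∧
      ∃ T : Finset ℂ, ∀ n, ∀ i ≤ γ, PowerSeries.coeff i (z n) ∈ T := by
  have hdvd (n : ℕ) : X ^ (2 * γ) ∣ z n ^ 3 - 3 * z n + btilde := ⟨z (n + 1), (hrec n).symm⟩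
  have hroot (n : ℕ) : coeff 0 (z n) ^ 3 - 3 * coeff 0 (z n) + 2 = 0 :=
    hb ▸ cubic_coeff_zero_eq_zero (by omega) (hdvd n)
  have hsol (n : ℕ) : z n ∈ cubicSolutions γ btilde {1, -2} := by
    refine ⟨hdvd n, ?_⟩
    rw [← hrec n, coeff_X_pow_mul', if_pos le_rfl, Nat.sub_self]
    exact eq_one_or_eq_neg_two_of_cubic_eq_zero (hroot (n + 1))
  have hfin := (Set.finite_Iic γ).biUnion fun i hi =>
    finite_coeff_image_cubicSolutions (by omega) hb (Set.toFinite {1, -2}) hi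
  exact ⟨hroot, hfin.toFinset, fun n i hi =>
    hfin.mem_toFinset.mpr (Set.mem_biUnion hi ⟨z n, hsol n, rfl⟩)⟩

theorem stmt15 (γ : ℕ) (hγ : 1 ≤ γ) (btilde : PowerSeries ℂ)
    (hb : PowerSeries.coeff 0 btilde = 2)
    (z : ℕ → PowerSeries ℂ)
    (hz0 : ∀ n, PowerSeries.coeff 0 (z n) ≠ 0)
    (hrec : ∀ n, (PowerSeries.X : PowerSeries ℂ) ^ (2 * γ) * z (n + 1) =
      (z n) ^ 3 - 3 * z n + btilde) :
    (∀ n, (PowerSeries.coeff 0 (z n)) ^ 3 - 3 * (PowerSeries.coeff 0 (z n)) + 2 = 0) ∧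
      ∃ T : Finset ℂ, ∀ n, ∀ i ≤ γ, PowerSeries.coeff i (z n) ∈ T :=
  stmt15_general γ hγ btilde hb z hrec
end

section
/- Let γ ≥ 1 be an integer, let 0 < r < 1, and let b̃ and (w_i)_{i≥0} be holomorphic functions on an open set containing the closed disk {|t| ≤ r} ⊂ ℂ, such that |b̃(t)| < 3 for all |t| ≤ r and t^{2γ}·w_{i+1}(t) = w_i(t)³ − 3·w_i(t) + b̃(t) for all i ≥ 0 and all |t| ≤ r. If M ≥ 11 is a real number with |w_0(t)| < M − 10 for all |t| ≤ r, then for every i ≥ 0 and every |t| ≤ r one has |w_i(t)| < M^{3^i} / r^{γ(3^i − 1)}. -/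
/-!
Put `B i = M ^ 3 ^ i / r ^ (γ * (3 ^ i - 1))`, so that `B (i + 1) = B i ^ 3 / r ^ (2 * γ)`.
We show `‖w i‖ ≤ B i - 1` on the closed disk by induction. On the boundary circle `|t| = r`
the recurrence gives `r ^ (2 * γ) ‖w (i + 1) t‖ ≤ (B i - 1) ^ 3 + 3 (B i - 1) + 3 ≤ B i ^ 3 - 1`,
and the maximum modulus principle carries this bound into the disk (the recurrence alone says
nothing about `w (i + 1)` near `t = 0`).
-/

open Metric

namespace Complex

theorem norm_le_of_forall_mem_sphere_norm_le {f : ℂ → ℂ} {c : ℂ} {r C : ℝ} (hr : r ≠ 0)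
    (hf : DifferentiableOn ℂ f (closedBall c r)) (hC : ∀ z ∈ sphere c r, ‖f z‖ ≤ C) :
    ∀ z ∈ closedBall c r, ‖f z‖ ≤ C := by
  intro z hz
  rw [← closure_ball c hr] at hf hz
  exact norm_le_of_forall_mem_frontier_norm_le isBounded_ball hf.diffContOnCl
    (by rwa [frontier_ball c hr]) hz

theorem norm_cubic_le {z b : ℂ} {a : ℝ} (ha : 2 ≤ a) (hz : ‖z‖ ≤ a - 1) (hb : ‖b‖ ≤ 3) :
    ‖z ^ 3 - 3 * z + b‖ ≤ a ^ 3 - 1 := by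
  have hz0 := norm_nonneg z
  calc ‖z ^ 3 - 3 * z + b‖ ≤ ‖z‖ ^ 3 + 3 * ‖z‖ + 3 := by
        grw [norm_add_le, norm_sub_le, hb]
        simp
    _ ≤ (a - 1) ^ 3 + 3 * (a - 1) + 3 := by gcongr
    _ ≤ a ^ 3 - 1 := by nlinarith

theorem norm_le_of_pow_mul_eq_cubic {r a : ℝ} {n : ℕ} {u v b : ℂ → ℂ} (hr0 : 0 < r) (hr1 : r ≤ 1)
    (ha : 2 ≤ a) (hv : DifferentiableOn ℂ v (closedBall 0 r))
    (hu : ∀ t ∈ sphere (0 : ℂ) r, ‖u t‖ ≤ a - 1) (hb : ∀ t ∈ sphere (0 : ℂ) r, ‖b t‖ ≤ 3)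
    (hrec : ∀ t ∈ sphere (0 : ℂ) r, t ^ n * v t = u t ^ 3 - 3 * u t + b t) :
    ∀ t ∈ closedBall (0 : ℂ) r, ‖v t‖ ≤ a ^ 3 / r ^ n - 1 := by
  have hrn : 0 < r ^ n := pow_pos hr0 n
  have hrn1 : r ^ n ≤ 1 := pow_le_one₀ hr0.le hr1
  refine norm_le_of_forall_mem_sphere_norm_le hr0.ne' hv fun t ht => ?_
  have hnorm : r ^ n * ‖v t‖ = ‖u t ^ 3 - 3 * u t + b t‖ := by
    rw [← hrec t ht, norm_mul, norm_pow, mem_sphere_zero_iff_norm.mp ht]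
  calc ‖v t‖ ≤ (a ^ 3 - 1) / r ^ n := by
        rw [le_div_iff₀ hrn, mul_comm, hnorm]
        exact norm_cubic_le ha (hu t ht) (hb t ht)
    _ ≤ a ^ 3 / r ^ n - 1 := by
        rw [sub_div, sub_le_sub_iff_left, le_div_iff₀ hrn, one_mul]
        exact hrn1

end Complex

theorem pow_three_pow_succ_div (M r : ℝ) (γ i : ℕ) :
    M ^ 3 ^ (i + 1) / r ^ (γ * (3 ^ (i + 1) - 1)) =
      (M ^ 3 ^ i / r ^ (γ * (3 ^ i - 1))) ^ 3 / r ^ (2 * γ) := by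
  have hexp : γ * (3 ^ (i + 1) - 1) = γ * (3 ^ i - 1) * 3 + 2 * γ := by
    have : 1 ≤ 3 ^ i := Nat.one_le_pow _ _ (by norm_num)
    rw [pow_succ]
    zify [this, (by omega : 1 ≤ 3 ^ i * 3)]
    ring
  rw [hexp, pow_succ 3 i, pow_add r, pow_mul r _ 3, pow_mul M, div_pow, div_div]

theorem le_pow_three_pow_div {M r : ℝ} (hM : 1 ≤ M) (hr0 : 0 < r) (hr1 : r ≤ 1) (γ i : ℕ) :
    M ≤ M ^ 3 ^ i / r ^ (γ * (3 ^ i - 1)) := by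
  rw [le_div_iff₀ (pow_pos hr0 _)]
  calc M * r ^ (γ * (3 ^ i - 1)) ≤ M * 1 := by
        gcongr
        exact pow_le_one₀ hr0.le hr1
    _ ≤ M ^ 3 ^ i := by
        rw [mul_one]
        exact le_self_pow₀ hM (by positivity)

theorem stmt16_general (γ : ℕ) (r : ℝ) (hr0 : 0 < r) (hr1 : r < 1)
    (btilde : ℂ → ℂ) (w : ℕ → ℂ → ℂ) (U : Set ℂ)
    (hUr : closedBall (0 : ℂ) r ⊆ U)
    (hwhol : ∀ i, DifferentiableOn ℂ (w i) U)
    (hbbd : ∀ t ∈ closedBall (0 : ℂ) r, ‖btilde t‖ < 3)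
    (hrec : ∀ i, ∀ t ∈ closedBall (0 : ℂ) r,
      t ^ (2 * γ) * w (i + 1) t = (w i t) ^ 3 - 3 * w i t + btilde t)
    (M : ℝ) (hM : 11 ≤ M)
    (hw0 : ∀ t ∈ closedBall (0 : ℂ) r, ‖w 0 t‖ < M - 10) :
    ∀ i, ∀ t ∈ closedBall (0 : ℂ) r,
      ‖w i t‖ < M ^ (3 ^ i) / r ^ (γ * (3 ^ i - 1)) := by
  have hsphere := @sphere_subset_closedBall ℂ _ 0 r
  suffices h : ∀ i, ∀ t ∈ closedBall (0 : ℂ) r, ‖w i t‖ ≤ M ^ (3 ^ i) / r ^ (γ * (3 ^ i - 1)) - 1 from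
    fun i t ht => (h i t ht).trans_lt (sub_one_lt _)
  intro i
  induction i with
  | zero =>
    intro t ht
    simpa using ((hw0 t ht).trans (by linarith)).le
  | succ i ih =>
    rw [pow_three_pow_succ_div]
    exact Complex.norm_le_of_pow_mul_eq_cubic hr0 hr1.le
      ((le_pow_three_pow_div (by linarith) hr0 hr1.le γ i).trans' (by linarith))
      ((hwhol (i + 1)).mono hUr) (fun t ht => ih t (hsphere ht))
      (fun t ht => (hbbd t (hsphere ht)).le) (fun t ht => hrec i t (hsphere ht))

theorem stmt16 (γ : ℕ) (hγ : 1 ≤ γ) (r : ℝ) (hr0 : 0 < r) (hr1 : r < 1)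
    (btilde : ℂ → ℂ) (w : ℕ → ℂ → ℂ) (U : Set ℂ) (hU : IsOpen U)
    (hUr : closedBall (0 : ℂ) r ⊆ U)
    (hbhol : DifferentiableOn ℂ btilde U)
    (hwhol : ∀ i, DifferentiableOn ℂ (w i) U)
    (hbbd : ∀ t ∈ closedBall (0 : ℂ) r, ‖btilde t‖ < 3)
    (hrec : ∀ i, ∀ t ∈ closedBall (0 : ℂ) r,
      t ^ (2 * γ) * w (i + 1) t = (w i t) ^ 3 - 3 * w i t + btilde t)
    (M : ℝ) (hM : 11 ≤ M)
    (hw0 : ∀ t ∈ closedBall (0 : ℂ) r, ‖w 0 t‖ < M - 10) :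
    ∀ i, ∀ t ∈ closedBall (0 : ℂ) r,
      ‖w i t‖ < M ^ (3 ^ i) / r ^ (γ * (3 ^ i - 1)) :=
  stmt16_general γ r hr0 hr1 btilde w U hUr hwhol hbbd hrec M hM hw0
end

section
/- For (a₁,b₁), (a₂,b₂) ∈ ℂ², there exists an invertible affine map A(z) = αz + β (α, β ∈ ℂ, α ≠ 0) with A(f_{a₁,b₁}(z)) = f_{a₂,b₂}(A(z)) for all z ∈ ℂ if and only if a₁² = a₂² and b₁² = b₂². -/
/-!
Expanding `A ∘ f_{a₁,b₁} = f_{a₂,b₂} ∘ A` for `A z = αz + β` and comparing coefficients gives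
`α³ = α` (so `α = ±1`), `β = 0` from the `z²` term, `a₁² = a₂²` from the `z` term and `b₂ = αb₁`
from the constant term. Conversely `z ↦ ±z` conjugates `f_{a,b}` to `f_{a,±b}`, as `f_{a,b}` is odd
up to its constant term.
-/

-- The values at `0, 1, -1, 2` already determine the coefficients.
theorem cubic_coeffs_eq_zero {K : Type*} [Field K] [CharZero K] {c₃ c₂ c₁ c₀ : K}
    (h : ∀ z : K, c₃ * z ^ 3 + c₂ * z ^ 2 + c₁ * z + c₀ = 0) :
    c₃ = 0 ∧ c₂ = 0 ∧ c₁ = 0 ∧ c₀ = 0 := by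
  have h₀ := h 0
  have h₁ := h 1
  have hm := h (-1)
  have h₂ := h 2
  norm_num at h₀ h₁ hm h₂
  refine ⟨?_, ?_, ?_, ?_⟩
  · linear_combination (h₂ - 3 * h₁ - hm + 3 * h₀) / 6
  · linear_combination (h₁ + hm - 2 * h₀) / 2
  · linear_combination (-h₂ + 6 * h₁ - 2 * hm - 3 * h₀) / 6
  · linear_combination h₀

theorem semiconj_affine_fab_iff {a₁ b₁ a₂ b₂ α β : ℂ} (hα : α ≠ 0) :
    Function.Semiconj (fun z => α * z + β) (fab a₁ b₁) (fab a₂ b₂) ↔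
      α ^ 2 = 1 ∧ β = 0 ∧ a₁ ^ 2 = a₂ ^ 2 ∧ b₂ = α * b₁ := by
  constructor
  · intro h
    obtain ⟨h₃, h₂, h₁, h₀⟩ := cubic_coeffs_eq_zero
      (c₃ := α ^ 3 - α) (c₂ := 3 * α ^ 2 * β) (c₁ := 3 * α * (β ^ 2 - a₂ ^ 2 + a₁ ^ 2))
      (c₀ := β ^ 3 - 3 * a₂ ^ 2 * β + b₂ - α * b₁ - β)
      fun z => by
        have hz := h z
        simp only [fab] at hz
        linear_combination -hz
    have hα₂ : α ^ 2 = 1 := mul_left_cancel₀ hα (by linear_combination h₃)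
    have hβ : β = 0 := by simpa [hα₂] using h₂
    subst hβ
    refine ⟨hα₂, rfl, ?_, by linear_combination h₀⟩
    have : -a₂ ^ 2 + a₁ ^ 2 = 0 := by simpa [hα] using h₁
    linear_combination this
  · rintro ⟨hα₂, rfl, ha, rfl⟩ z
    simp only [fab]
    linear_combination (-α * z ^ 3) * hα₂ - 3 * α * z * ha

theorem stmt17 (a₁ b₁ a₂ b₂ : ℂ) :
    (∃ α β : ℂ, α ≠ 0 ∧ ∀ z : ℂ, α * fab a₁ b₁ z + β = fab a₂ b₂ (α * z + β)) ↔
      a₁ ^ 2 = a₂ ^ 2 ∧ b₁ ^ 2 = b₂ ^ 2 := by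
  constructor
  · rintro ⟨α, β, hα, h⟩
    obtain ⟨hα₂, -, ha, rfl⟩ := (semiconj_affine_fab_iff hα).mp h
    exact ⟨ha, by rw [mul_pow, hα₂, one_mul]⟩
  · rintro ⟨ha, hb⟩
    obtain ⟨α, hα₂, hb⟩ : ∃ α : ℂ, α ^ 2 = 1 ∧ b₂ = α * b₁ := by
      rcases sq_eq_sq_iff_eq_or_eq_neg.mp hb.symm with h | h
      · exact ⟨1, one_pow 2, by rw [h, one_mul]⟩
      · exact ⟨-1, by norm_num, by rw [h, neg_one_mul]⟩
    have hα : α ≠ 0 := by rintro rfl; norm_num at hα₂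
    exact ⟨α, 0, hα, (semiconj_affine_fab_iff hα).mpr ⟨hα₂, rfl, ha, hb⟩⟩
end
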